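/- arXiv:2311.12599 — 12 statements merged into one kernel-verified Lean document; each statement's English description precedes it below -/
import Mathlib

section
/- Let S be a weak contact semilattice satisfying (D1). Then S can be embedded into (the join-semilattice reduct of) a Boolean algebra equipped with a weak contact relation; that is, there exist a Boolean algebra B, a weak contact relation δ_B on B, and an injective map h : S → B with h(0) = 0, h(a + b) = h(a) ⊔ h(b) for all a, b ∈ S, and a δ_S b if and only if h(a) δ_B h(b) for all a, b ∈ S. -/
/-- A weak contact relation on a poset with least element `⊥`. -/
def IsWeakContact {S : Type*} [PartialOrder S] [OrderBot S] (δ : S → S → Prop) : Prop :=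
  (∀ a b : S, δ a b → a ≠ ⊥ ∧ b ≠ ⊥) ∧
  (∀ a : S, a ≠ ⊥ → δ a a) ∧
  (∀ a b : S, δ a b → δ b a) ∧
  (∀ a b a₁ b₁ : S, δ a b → a ≤ a₁ → b ≤ b₁ → δ a₁ b₁)

/-- Condition (D1). -/
def CondD1 {S : Type*} [SemilatticeSup S] [OrderBot S] (δ : S → S → Prop) : Prop :=
  ∀ a b c₀ c₁ : S, ¬ δ c₀ c₁ → b ≤ a ⊔ c₀ → b ≤ a ⊔ c₁ → b ≤ a

/-!
Points are order ideals of `S` whose complement is a `δ`-clique, and `a` is sent to the set of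
points avoiding it. Sending `⊔` to `∪` only uses that ideals are closed under joins. Injectivity
and reflection of contact need enough points: if `a ≰ c`, an ideal maximal among those that
contain `c` and avoid `a` is a point, because by maximality `a ≤ i ⊔ x` and `a ≤ i ⊔ y` for some
`i` in it whenever `x, y` lie outside it, and (D1) then forces `x δ y`. Two sets of points are
in contact when both are nonempty and all `c, d` whose images contain them are in contact; this is
reflexive because the elements avoided by a single point are pairwise in contact.
-/

open Order

namespace Order.Ideal

theorem exists_le_maximal_notMem {P : Type*} [LE P] {I : Ideal P} {a : P} (ha : a ∉ I) :
    ∃ J, I ≤ J ∧ Maximal (fun J : Ideal P => a ∉ J) J := by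
  refine zorn_le_nonempty₀ _ (fun C hC hchain J hJ => ?_) I ha
  have hideal : IsIdeal (⋃₀ (SetLike.coe '' C)) :=
    isIdeal_sUnion_of_isChain (by simp [Ideal.isIdeal])
      (hchain.image_of_map_rel _ _ SetLike.coe fun _ _ h => h) ⟨J, J, hJ, rfl⟩
  refine ⟨hideal.toIdeal, ?_, fun K hK => ?_⟩
  · rintro ⟨K, ⟨K, hK, rfl⟩, haK⟩
    exact hC hK haK
  · simpa [le_toIdeal] using Set.subset_biUnion_of_mem hK

variable {S : Type*} [SemilatticeSup S] [OrderBot S]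

theorem exists_le_sup_of_maximal_notMem {I : Ideal S} {a z : S}
    (hI : Maximal (fun J : Ideal S => a ∉ J) I) (hz : z ∉ I) : ∃ i ∈ I, a ≤ i ⊔ z := by
  have ha : a ∈ I ⊔ principal z := by
    by_contra ha
    exact (lt_sup_principal_of_notMem hz).not_ge (hI.2 ha (lt_sup_principal_of_notMem hz).le)
  obtain ⟨i, hi, j, hj, haij⟩ := mem_sup.1 ha
  exact ⟨i, hi, haij.trans (sup_le_sup_left (mem_principal.1 hj) i)⟩

theorem rel_of_notMem_of_maximal_notMem {δ : S → S → Prop} (hD1 : CondD1 δ) {I : Ideal S}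
    {a : S} (hI : Maximal (fun J : Ideal S => a ∉ J) I) {x y : S} (hx : x ∉ I) (hy : y ∉ I) :
    δ x y := by
  by_contra hxy
  obtain ⟨i, hi, hix⟩ := exists_le_sup_of_maximal_notMem hI hx
  obtain ⟨j, hj, hjy⟩ := exists_le_sup_of_maximal_notMem hI hy
  have hij : i ⊔ j ∈ I := sup_mem hi hj
  refine hI.1 (I.lower (hD1 (i ⊔ j) a x y hxy ?_ ?_) hij)
  · exact hix.trans (sup_le_sup_right le_sup_left x)
  · exact hjy.trans (sup_le_sup_right le_sup_right y)

end Order.Ideal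

section InducedContact

variable {S X : Type*}

def inducedContact (δ : S → S → Prop) (f : S → Set X) (U V : Set X) : Prop :=
  U.Nonempty ∧ V.Nonempty ∧ ∀ c d, U ⊆ f c → V ⊆ f d → δ c d

theorem isWeakContact_inducedContact {δ : S → S → Prop} {f : S → Set X}
    (hsymm : ∀ a b, δ a b → δ b a) (hclique : ∀ x c d, x ∈ f c → x ∈ f d → δ c d) :
    IsWeakContact (inducedContact δ f) := by
  refine ⟨?_, ?_, ?_, ?_⟩
  · rintro U V ⟨hU, hV, -⟩
    exact ⟨hU.ne_empty, hV.ne_empty⟩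
  · intro U hU
    obtain ⟨x, hx⟩ := Set.nonempty_iff_ne_empty.2 hU
    exact ⟨⟨x, hx⟩, ⟨x, hx⟩, fun c d hc hd => hclique x c d (hc hx) (hd hx)⟩
  · rintro U V ⟨hU, hV, hδ⟩
    exact ⟨hV, hU, fun c d hc hd => hsymm d c (hδ d c hd hc)⟩
  · rintro U V U₁ V₁ ⟨hU, hV, hδ⟩ hUU₁ hVV₁
    exact ⟨hU.mono hUU₁, hV.mono hVV₁, fun c d hc hd => hδ c d (hUU₁.trans hc) (hVV₁.trans hd)⟩

theorem inducedContact_iff [PartialOrder S] [OrderBot S] {δ : S → S → Prop}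
    (hδ : IsWeakContact δ) {f : S → Set X} (hf : ∀ a c, f a ⊆ f c → a ≤ c) (hbot : f ⊥ = ∅)
    (a b : S) : δ a b ↔ inducedContact δ f (f a) (f b) := by
  have hne : ∀ a, a ≠ ⊥ → (f a).Nonempty := fun a ha =>
    Set.nonempty_iff_ne_empty.2 fun hfa => ha (le_bot_iff.1 (hf a ⊥ (by rw [hfa, hbot])))
  refine ⟨fun hab => ?_, fun hab => hab.2.2 a b le_rfl le_rfl⟩
  obtain ⟨ha, hb⟩ := hδ.1 a b hab
  exact ⟨hne a ha, hne b hb, fun c d hc hd => hδ.2.2.2 a b c d hab (hf a c hc) (hf b d hd)⟩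

end InducedContact

section ContactPoint

variable {S : Type*} [SemilatticeSup S]

def ContactPoint (δ : S → S → Prop) : Type _ :=
  {I : Ideal S // ∀ x ∉ I, ∀ y ∉ I, δ x y}

def avoiding (δ : S → S → Prop) (a : S) : Set (ContactPoint δ) :=
  {P | a ∉ P.1}

variable {δ : S → S → Prop}

theorem avoiding_bot [OrderBot S] : avoiding δ ⊥ = ∅ :=
  Set.eq_empty_of_forall_notMem fun P hP => hP P.1.bot_mem

theorem avoiding_sup (a b : S) : avoiding δ (a ⊔ b) = avoiding δ a ∪ avoiding δ b := by
  ext P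
  simp only [avoiding, Set.mem_union, Set.mem_ofPred_eq, Ideal.sup_mem_iff, not_and_or]

theorem le_of_avoiding_subset [OrderBot S] (hD1 : CondD1 δ) {a c : S}
    (hac : avoiding δ a ⊆ avoiding δ c) : a ≤ c := by
  by_contra hac'
  have ha : a ∉ Ideal.principal c := fun ha => hac' (Ideal.mem_principal.1 ha)
  obtain ⟨I, hcI, hI⟩ := Ideal.exists_le_maximal_notMem ha
  have hP : (⟨I, fun x hx y hy => Ideal.rel_of_notMem_of_maximal_notMem hD1 hI hx hy⟩ :
      ContactPoint δ) ∈ avoiding δ a := hI.1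
  exact hac hP (hcI Ideal.mem_principal_self)

end ContactPoint

theorem stmt0 {S : Type} [SemilatticeSup S] [OrderBot S] (δS : S → S → Prop)
    (hwc : IsWeakContact δS) (hD1 : CondD1 δS) :
    ∃ (B : Type) (_ : BooleanAlgebra B) (δB : B → B → Prop) (h : S → B),
      IsWeakContact δB ∧
      Function.Injective h ∧
      h ⊥ = ⊥ ∧
      (∀ a b : S, h (a ⊔ b) = h a ⊔ h b) ∧
      (∀ a b : S, δS a b ↔ δB (h a) (h b)) := by
  have hle : ∀ a c, avoiding δS a ⊆ avoiding δS c → a ≤ c := fun _ _ => le_of_avoiding_subset hD1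
  refine ⟨Set (ContactPoint δS), inferInstance, inducedContact δS (avoiding δS), avoiding δS,
    isWeakContact_inducedContact hwc.2.2.1 (fun P c d hc hd => P.2 c hc d hd),
    fun a b hab => le_antisymm (hle a b hab.le) (hle b a hab.ge), avoiding_bot, avoiding_sup,
    inducedContact_iff hwc hle avoiding_bot⟩
end

section
/- Let S be a weak contact semilattice that can be embedded into a Boolean algebra equipped with a weak contact relation (i.e., there exist a Boolean algebra B, a weak contact relation δ_B on B, and an injective map h : S → B with h(0) = 0, h(a + b) = h(a) ⊔ h(b), and a δ_S b if and only if h(a) δ_B h(b)). Then S satisfies (D1). -/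
/-! In a Boolean algebra, `b \ a` lies below both `c₀` and `c₁`, so it is `⊥` unless
`c₀ δ c₁`. Condition (D1) only involves joins, order and `δ`, and an injective join-homomorphism
reflecting `δ` is an order embedding, so (D1) passes to the embedded semilattice. -/

theorem IsWeakContact.condD1 {B : Type*} [GeneralizedBooleanAlgebra B] {δ : B → B → Prop}
    (hδ : IsWeakContact δ) : CondD1 δ := by
  obtain ⟨-, hrefl, -, hext⟩ := hδ
  intro a b c₀ c₁ hnd hb₀ hb₁
  have hdiff : b \ a = ⊥ := by
    by_contra hne
    exact hnd (hext _ _ _ _ (hrefl _ hne) (sdiff_le_iff.mpr hb₀) (sdiff_le_iff.mpr hb₁))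
  exact sdiff_eq_bot_iff.mp hdiff

theorem le_iff_of_injective_map_sup {S T : Type*} [SemilatticeSup S] [SemilatticeSup T]
    {h : S → T} (hinj : Function.Injective h) (hsup : ∀ a b, h (a ⊔ b) = h a ⊔ h b) {a b : S} :
    h a ≤ h b ↔ a ≤ b := by
  rw [← sup_eq_right, ← hsup, hinj.eq_iff, sup_eq_right]

theorem CondD1.of_injective_map_sup {S T : Type*} [SemilatticeSup S] [OrderBot S]
    [SemilatticeSup T] [OrderBot T] {δS : S → S → Prop} {δT : T → T → Prop} (hT : CondD1 δT)
    {h : S → T} (hinj : Function.Injective h) (hsup : ∀ a b, h (a ⊔ b) = h a ⊔ h b)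
    (hδ : ∀ a b, δT (h a) (h b) → δS a b) : CondD1 δS := by
  intro a b c₀ c₁ hnd hb₀ hb₁
  have hle {x y : S} : h x ≤ h y ↔ x ≤ y := le_iff_of_injective_map_sup hinj hsup
  rw [← hle] at hb₀ hb₁ ⊢
  rw [hsup] at hb₀ hb₁
  exact hT _ _ _ _ (mt (hδ c₀ c₁) hnd) hb₀ hb₁

theorem stmt1_general {S : Type} [SemilatticeSup S] [OrderBot S] (δS : S → S → Prop)
    (hemb : ∃ (B : Type) (_ : BooleanAlgebra B) (δB : B → B → Prop) (h : S → B),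
      IsWeakContact δB ∧
      Function.Injective h ∧
      h ⊥ = ⊥ ∧
      (∀ a b : S, h (a ⊔ b) = h a ⊔ h b) ∧
      (∀ a b : S, δS a b ↔ δB (h a) (h b))) :
    CondD1 δS := by
  obtain ⟨B, _, δB, h, hδB, hinj, -, hsup, hiff⟩ := hemb
  exact hδB.condD1.of_injective_map_sup hinj hsup fun a b => (hiff a b).mpr

theorem stmt1 {S : Type} [SemilatticeSup S] [OrderBot S] (δS : S → S → Prop)
    (hwc : IsWeakContact δS)
    (hemb : ∃ (B : Type) (_ : BooleanAlgebra B) (δB : B → B → Prop) (h : S → B),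
      IsWeakContact δB ∧
      Function.Injective h ∧
      h ⊥ = ⊥ ∧
      (∀ a b : S, h (a ⊔ b) = h a ⊔ h b) ∧
      (∀ a b : S, δS a b ↔ δB (h a) (h b))) :
    CondD1 δS :=
  stmt1_general δS hemb
end

section
/- A weak contact semilattice S satisfies (D1) if and only if S can be embedded into a distributive lattice equipped with a weak contact relation; that is, if and only if there exist a distributive lattice D with least element 0, a weak contact relation δ_D on D, and an injective map h : S → D with h(0) = 0, h(a + b) = h(a) ⊔ h(b) for all a, b ∈ S, and a δ_S b if and only if h(a) δ_D h(b) for all a, b ∈ S. -/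
open Order

section Necessity

variable {D : Type*}

theorem IsWeakContact.inf_eq_bot_of_not [Lattice D] [OrderBot D] {δ : D → D → Prop}
    (hδ : IsWeakContact δ) {x y : D} (hxy : ¬ δ x y) : x ⊓ y = ⊥ := by
  by_contra hne
  exact hxy (hδ.2.2.2 _ _ _ _ (hδ.2.1 _ hne) inf_le_left inf_le_right)

variable {S : Type*} [SemilatticeSup S]

theorem le_iff_of_injective_of_map_sup [SemilatticeSup D] {h : S → D}
    (hinj : Function.Injective h) (hsup : ∀ a b, h (a ⊔ b) = h a ⊔ h b) {a b : S} :
    h a ≤ h b ↔ a ≤ b := by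
  rw [← sup_eq_right, ← hsup, hinj.eq_iff, sup_eq_right]

theorem condD1_of_embedding [OrderBot S] [DistribLattice D] [OrderBot D] {δS : S → S → Prop}
    {δD : D → D → Prop} (hδD : IsWeakContact δD) {h : S → D} (hinj : Function.Injective h)
    (hsup : ∀ a b, h (a ⊔ b) = h a ⊔ h b) (hδ : ∀ a b, δS a b ↔ δD (h a) (h b)) :
    CondD1 δS := by
  intro a b c₀ c₁ hc hb₀ hb₁
  have hle {x y : S} : h x ≤ h y ↔ x ≤ y := le_iff_of_injective_of_map_sup hinj hsup
  have hdisj : h c₀ ⊓ h c₁ = ⊥ := hδD.inf_eq_bot_of_not (mt (hδ c₀ c₁).mpr hc)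
  rw [← hle]
  calc h b ≤ h (a ⊔ c₀) ⊓ h (a ⊔ c₁) := le_inf (hle.mpr hb₀) (hle.mpr hb₁)
    _ = h a := by rw [hsup, hsup, ← sup_inf_left, hdisj, sup_bot_eq]

end Necessity

section PrimeClan

variable {S : Type*} [SemilatticeSup S] [OrderBot S] {δ : S → S → Prop}

variable (δ) in
structure IsPrimeClan (P : Set S) : Prop where
  isUpperSet : IsUpperSet P
  mem_or_mem : ∀ {x y : S}, x ⊔ y ∈ P → x ∈ P ∨ y ∈ P
  contact : ∀ x ∈ P, ∀ y ∈ P, δ x y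
  bot_notMem : ⊥ ∉ P

theorem exists_ideal_maximal_notMem {a b : S} (hab : ¬ a ≤ b) :
    ∃ J : Ideal S, b ∈ J ∧ a ∉ J ∧ ∀ x ∉ J, ∃ j ∈ J, a ≤ j ⊔ x := by
  set F : Set (Set S) := {I | IsIdeal I ∧ a ∉ I}
  have hchain : ∀ c ⊆ F, IsChain (· ⊆ ·) c → c.Nonempty → ∃ ub ∈ F, ∀ s ∈ c, s ⊆ ub :=
    fun c hcF hc hne => ⟨⋃₀ c, ⟨isIdeal_sUnion_of_isChain (fun I hI => (hcF hI).1) hc hne,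
      fun ⟨I, hI, haI⟩ => (hcF hI).2 haI⟩, fun _ => Set.subset_sUnion_of_mem⟩
  obtain ⟨Jset, hbJ, hmax⟩ := zorn_subset_nonempty F hchain (Ideal.principal b)
    ⟨(Ideal.principal b).isIdeal, hab⟩
  set J := hmax.prop.1.toIdeal
  refine ⟨J, hbJ Ideal.mem_principal_self, hmax.prop.2, fun x hx => ?_⟩
  have haJx : a ∈ J ⊔ Ideal.principal x := by
    by_contra haJx
    have hle : ((J ⊔ Ideal.principal x : Ideal S) : Set S) ⊆ J :=
      hmax.le_of_ge ⟨Ideal.isIdeal _, haJx⟩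
        fun y hy => (le_sup_left : J ≤ J ⊔ Ideal.principal x) hy
    exact (Ideal.lt_sup_principal_of_notMem hx).not_ge (Ideal.coe_subset_coe.mp hle)
  obtain ⟨j, hj, y, hyx, hay⟩ := Ideal.mem_sup.mp haJx
  exact ⟨j, hj, hay.trans (sup_le_sup_left (Ideal.mem_principal.mp hyx) j)⟩

theorem isPrimeClan_compl_of_forall_notMem (hd1 : CondD1 δ) {a : S} (J : Ideal S)
    (haJ : a ∉ J) (hJ : ∀ x ∉ J, ∃ j ∈ J, a ≤ j ⊔ x) : IsPrimeClan δ (J : Set S)ᶜ where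
  isUpperSet := J.lower.compl
  mem_or_mem hxy := by
    by_contra! h
    exact hxy (Ideal.sup_mem (not_not.mp h.1) (not_not.mp h.2))
  contact x hx y hy := by
    by_contra hxy
    obtain ⟨j₀, hj₀, ha₀⟩ := hJ x hx
    obtain ⟨j₁, hj₁, ha₁⟩ := hJ y hy
    refine haJ (J.lower (hd1 (j₀ ⊔ j₁) a x y hxy ?_ ?_) (Ideal.sup_mem hj₀ hj₁))
    · exact ha₀.trans (sup_le_sup_right le_sup_left x)
    · exact ha₁.trans (sup_le_sup_right le_sup_right y)
  bot_notMem h := h J.bot_mem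

theorem exists_isPrimeClan_mem_notMem (hd1 : CondD1 δ) {a b : S} (hab : ¬ a ≤ b) :
    ∃ P, IsPrimeClan δ P ∧ a ∈ P ∧ b ∉ P := by
  obtain ⟨J, hbJ, haJ, hJ⟩ := exists_ideal_maximal_notMem hab
  exact ⟨_, isPrimeClan_compl_of_forall_notMem hd1 J haJ hJ, haJ, not_not.mpr hbJ⟩

variable (δ) in
abbrev PrimeClan : Type _ := {P : Set S // IsPrimeClan δ P}

variable (δ) in
def clansContaining (a : S) : Set (PrimeClan δ) := {P | a ∈ P.1}

theorem clansContaining_bot : clansContaining δ ⊥ = ∅ :=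
  Set.eq_empty_of_forall_notMem fun P => P.2.bot_notMem

theorem clansContaining_sup (a b : S) :
    clansContaining δ (a ⊔ b) = clansContaining δ a ∪ clansContaining δ b :=
  Set.ext fun P => ⟨P.2.mem_or_mem, fun h => h.elim
    (fun ha => P.2.isUpperSet le_sup_left ha) (fun hb => P.2.isUpperSet le_sup_right hb)⟩

theorem clansContaining_subset_iff (hd1 : CondD1 δ) {a b : S} :
    clansContaining δ a ⊆ clansContaining δ b ↔ a ≤ b := by
  refine ⟨fun hsub => ?_, fun hab P hP => P.2.isUpperSet hab hP⟩
  by_contra hab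
  obtain ⟨P, hP, haP, hbP⟩ := exists_isPrimeClan_mem_notMem hd1 hab
  exact hbP (hsub (show (⟨P, hP⟩ : PrimeClan δ) ∈ clansContaining δ a from haP))

theorem clansContaining_injective (hd1 : CondD1 δ) :
    Function.Injective (clansContaining δ) := fun _ _ h =>
  le_antisymm ((clansContaining_subset_iff hd1).mp h.le) ((clansContaining_subset_iff hd1).mp h.ge)

theorem clansContaining_nonempty (hd1 : CondD1 δ) {a : S} (ha : a ≠ ⊥) :
    (clansContaining δ a).Nonempty := by
  obtain ⟨P, hP, haP, -⟩ := exists_isPrimeClan_mem_notMem hd1 (mt le_bot_iff.mp ha)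
  exact ⟨⟨P, hP⟩, haP⟩

variable (δ) in
def clanContact (A B : Set (PrimeClan δ)) : Prop :=
  A.Nonempty ∧ B.Nonempty ∧
    ∀ c₀ c₁, A ⊆ clansContaining δ c₀ → B ⊆ clansContaining δ c₁ → δ c₀ c₁

theorem isWeakContact_clanContact (hsymm : ∀ a b, δ a b → δ b a) :
    IsWeakContact (clanContact δ) := by
  refine ⟨fun A B h => ⟨h.1.ne_empty, h.2.1.ne_empty⟩, fun A hA => ?_, ?_, ?_⟩
  · obtain ⟨P, hP⟩ := Set.nonempty_iff_ne_empty.mpr hA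
    exact ⟨⟨P, hP⟩, ⟨P, hP⟩, fun c₀ c₁ h₀ h₁ => P.2.contact c₀ (h₀ hP) c₁ (h₁ hP)⟩
  · rintro A B ⟨hA, hB, hAB⟩
    exact ⟨hB, hA, fun c₀ c₁ h₀ h₁ => hsymm _ _ (hAB c₁ c₀ h₁ h₀)⟩
  · rintro A B A₁ B₁ ⟨hA, hB, hAB⟩ hAA₁ hBB₁
    exact ⟨hA.mono hAA₁, hB.mono hBB₁,
      fun c₀ c₁ h₀ h₁ => hAB c₀ c₁ (hAA₁.trans h₀) (hBB₁.trans h₁)⟩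

theorem clanContact_clansContaining_iff (hδ : IsWeakContact δ) (hd1 : CondD1 δ) {a b : S} :
    clanContact δ (clansContaining δ a) (clansContaining δ b) ↔ δ a b := by
  refine ⟨fun h => h.2.2 a b subset_rfl subset_rfl, fun hab => ?_⟩
  obtain ⟨ha, hb⟩ := hδ.1 a b hab
  refine ⟨clansContaining_nonempty hd1 ha, clansContaining_nonempty hd1 hb,
    fun c₀ c₁ h₀ h₁ => hδ.2.2.2 a b c₀ c₁ hab ?_ ?_⟩
  · exact (clansContaining_subset_iff hd1).mp h₀
  · exact (clansContaining_subset_iff hd1).mp h₁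

end PrimeClan

theorem stmt2 {S : Type} [SemilatticeSup S] [OrderBot S] (δS : S → S → Prop)
    (hwc : IsWeakContact δS) :
    CondD1 δS ↔
      ∃ (D : Type) (_ : DistribLattice D) (_ : OrderBot D) (δD : D → D → Prop) (h : S → D),
        IsWeakContact δD ∧
        Function.Injective h ∧
        h ⊥ = ⊥ ∧
        (∀ a b : S, h (a ⊔ b) = h a ⊔ h b) ∧
        (∀ a b : S, δS a b ↔ δD (h a) (h b)) := by
  constructor
  · intro hd1
    exact ⟨Set (PrimeClan δS), inferInstance, inferInstance, clanContact δS, clansContaining δS,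
      isWeakContact_clanContact hwc.2.2.1, clansContaining_injective hd1, clansContaining_bot,
      clansContaining_sup, fun a b => (clanContact_clansContaining_iff hwc hd1).symm⟩
  · rintro ⟨D, _, _, δD, h, hδD, hinj, -, hsup, hδ⟩
    exact condD1_of_embedding hδD hinj hsup hδ
end

section
/- Let S be a weak contact semilattice satisfying (D1). Then S satisfies (D1+): for every positive integer n and all elements a, b, c_{1,0}, c_{1,1}, …, c_{n,0}, c_{n,1} ∈ S, if ¬(c_{i,0} δ c_{i,1}) for every i ∈ {1, …, n}, and b ≤ a + c_{1,f(1)} + ⋯ + c_{n,f(n)} for every function f : {1, …, n} → {0, 1}, then b ≤ a. -/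
/-- Condition (D1+). -/
def CondD1plus {S : Type*} [SemilatticeSup S] [OrderBot S] (δ : S → S → Prop) : Prop :=
  ∀ n : ℕ, 0 < n → ∀ (a b : S) (c : Fin n → Bool → S),
    (∀ i, ¬ δ (c i false) (c i true)) →
    (∀ f : Fin n → Bool, b ≤ a ⊔ Finset.univ.sup (fun i => c i (f i))) →
    b ≤ a

/-!
Induction on the finite index set: to remove the last pair `c j false, c j true` from the
hypothesis, fix the choices `f` on the remaining indices and apply (D1) with
`a ⊔ s.sup fun i => c i (f i)` in the role of `a`.
-/

theorem CondD1.le_of_forall_le_sup_finset_sup {S ι : Type*} [SemilatticeSup S] [OrderBot S]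
    {δ : S → S → Prop} (hD1 : CondD1 δ) {a b : S} {c : ι → Bool → S} (s : Finset ι)
    (hc : ∀ i ∈ s, ¬ δ (c i false) (c i true))
    (hb : ∀ f : ι → Bool, b ≤ a ⊔ s.sup fun i => c i (f i)) :
    b ≤ a := by
  classical
  induction s using Finset.induction_on with
  | empty => simpa using hb fun _ => false
  | insert j s hj ih =>
    refine ih (fun i hi => hc i (Finset.mem_insert_of_mem hi)) fun f => ?_
    have hchoice : ∀ x, b ≤ (a ⊔ s.sup fun i => c i (f i)) ⊔ c j x := by
      intro x
      have hupdate : (s.sup fun i => c i (Function.update f j x i)) = s.sup fun i => c i (f i) :=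
        Finset.sup_congr rfl fun i hi => by
          rw [Function.update_of_ne (ne_of_mem_of_not_mem hi hj)]
      simpa [Finset.sup_insert, hupdate, sup_comm, sup_left_comm, sup_assoc]
        using hb (Function.update f j x)
    exact hD1 _ _ _ _ (hc j (Finset.mem_insert_self j s)) (hchoice false) (hchoice true)

theorem stmt4_general {S : Type*} [SemilatticeSup S] [OrderBot S] (δS : S → S → Prop)
    (hD1 : CondD1 δS) :
    CondD1plus δS :=
  fun _ _ _ _ _ hc hb => hD1.le_of_forall_le_sup_finset_sup Finset.univ (fun i _ => hc i) hb

theorem stmt4 {S : Type*} [SemilatticeSup S] [OrderBot S] (δS : S → S → Prop)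
    (hwc : IsWeakContact δS) (hD1 : CondD1 δS) :
    CondD1plus δS :=
  stmt4_general δS hD1
end

section
/- Let S be a weak contact semilattice satisfying (D1), let n be a positive integer and let a, b, c_{1,0}, c_{1,1}, …, c_{n,0}, c_{n,1} ∈ S satisfy: ¬(c_{i,0} δ c_{i,1}) for every i ∈ {1, …, n}; b ≤ c_{1,f(1)} + ⋯ + c_{n,f(n)} for every f : {1, …, n} → {0, 1} with f(1) = 0; and a ≤ c_{1,f(1)} + ⋯ + c_{n,f(n)} for every f : {1, …, n} → {0, 1} with f(1) = 1. Then b ≤ c_{1,0}, a ≤ c_{1,1}, and consequently ¬(b δ a). -/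
namespace CondD1

variable {S ι : Type*} [SemilatticeSup S] [OrderBot S] {δ : S → S → Prop}
  {c : ι → Bool → S}

theorem le_of_forall_le_sup_finsetSup [DecidableEq ι] (hD1 : CondD1 δ)
    (hc : ∀ i, ¬ δ (c i false) (c i true)) {x y : S} (s : Finset ι)
    (h : ∀ f : ι → Bool, x ≤ y ⊔ s.sup fun i => c i (f i)) : x ≤ y := by
  induction s using Finset.induction_on with
  | empty => simpa using h fun _ => false
  | insert j s hj ih =>
    refine ih fun f => ?_
    have hw (w : Bool) : x ≤ (y ⊔ s.sup fun i => c i (f i)) ⊔ c j w := by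
      have hsup : (s.sup fun i => c i (Function.update f j w i)) = s.sup fun i => c i (f i) :=
        Finset.sup_congr rfl fun i hi => by
          rw [Function.update_of_ne (ne_of_mem_of_not_mem hi hj)]
      have := h (Function.update f j w)
      rwa [Finset.sup_insert, Function.update_self, hsup, sup_left_comm, sup_comm] at this
    exact hD1 _ _ _ _ (hc j) (hw false) (hw true)

theorem le_of_forall_le_univ_sup [Fintype ι] [DecidableEq ι] (hD1 : CondD1 δ)
    (hc : ∀ i, ¬ δ (c i false) (c i true)) {x : S} (j : ι) (v : Bool)
    (h : ∀ f : ι → Bool, f j = v → x ≤ Finset.univ.sup fun i => c i (f i)) :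
    x ≤ c j v := by
  refine hD1.le_of_forall_le_sup_finsetSup hc (Finset.univ.erase j) fun f => ?_
  have hsup : ((Finset.univ.erase j).sup fun i => c i (Function.update f j v i)) =
      (Finset.univ.erase j).sup fun i => c i (f i) :=
    Finset.sup_congr rfl fun i hi => by rw [Function.update_of_ne (Finset.ne_of_mem_erase hi)]
  have := h (Function.update f j v) (Function.update_self j v f)
  rwa [← Finset.insert_erase (Finset.mem_univ j), Finset.sup_insert, Function.update_self,
    hsup] at this

end CondD1

theorem stmt5 {S : Type*} [SemilatticeSup S] [OrderBot S] (δS : S → S → Prop)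
    (hwc : IsWeakContact δS) (hD1 : CondD1 δS)
    (n : ℕ) (hn : 0 < n) (a b : S) (c : Fin n → Bool → S)
    (hc : ∀ i, ¬ δS (c i false) (c i true))
    (hb : ∀ f : Fin n → Bool, f ⟨0, hn⟩ = false →
      b ≤ Finset.univ.sup (fun i => c i (f i)))
    (ha : ∀ f : Fin n → Bool, f ⟨0, hn⟩ = true →
      a ≤ Finset.univ.sup (fun i => c i (f i))) :
    b ≤ c ⟨0, hn⟩ false ∧ a ≤ c ⟨0, hn⟩ true ∧ ¬ δS b a := by
  have hb₀ := hD1.le_of_forall_le_univ_sup hc _ _ hb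
  have ha₀ := hD1.le_of_forall_le_univ_sup hc _ _ ha
  exact ⟨hb₀, ha₀, fun hba => hc _ (hwc.2.2.2 _ _ _ _ hba hb₀ ha₀)⟩
end

section
/- Let S be a poset with least element 0 carrying a weak contact relation δ_S, let Q be a poset with least element 0, and let κ : S → Q be an order embedding (a ≤ b if and only if κ(a) ≤ κ(b)) with κ(a) = 0 if and only if a = 0. Let δ_Q be defined on Q by: b₁ δ_Q b₂ if and only if either (a) there is q ∈ Q with 0 < q, q ≤ b₁ and q ≤ b₂, or (b) there are a₁, a₂ ∈ S with a₁ δ_S a₂, κ(a₁) ≤ b₁ and κ(a₂) ≤ b₂. Assume moreover that whenever ¬(a₁ δ_S a₂), the meet of κ(a₁) and κ(a₂) in Q exists and equals 0. Then κ is a contact embedding from S into (Q, δ_Q): that is, a₁ δ_S a₂ if and only if κ(a₁) δ_Q κ(a₂), for all a₁, a₂ ∈ S. -/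
theorem IsWeakContact.mono {S : Type*} [PartialOrder S] [OrderBot S] {δ : S → S → Prop}
    (h : IsWeakContact δ) {a b a₁ b₁ : S} (hab : δ a b) (ha : a ≤ a₁) (hb : b ≤ b₁) :
    δ a₁ b₁ :=
  h.2.2.2 a b a₁ b₁ hab ha hb

theorem IsGLB.eq_bot_of_le_of_le {Q : Type*} [PartialOrder Q] [OrderBot Q] {x y q : Q}
    (h : IsGLB {x, y} (⊥ : Q)) (hx : q ≤ x) (hy : q ≤ y) : q = ⊥ :=
  le_bot_iff.mp <| h.2 <| by
    rintro z (rfl | rfl)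
    exacts [hx, hy]

theorem stmt7_general {S Q : Type*} [PartialOrder S] [OrderBot S] [PartialOrder Q] [OrderBot Q]
    (δS : S → S → Prop) (hwc : IsWeakContact δS)
    (κ : S → Q) (hemb : ∀ a b : S, a ≤ b ↔ κ a ≤ κ b)
    (δQ : Q → Q → Prop)
    (hδQ : ∀ b₁ b₂ : Q, δQ b₁ b₂ ↔
      (∃ q : Q, ⊥ < q ∧ q ≤ b₁ ∧ q ≤ b₂) ∨
      (∃ a₁ a₂ : S, δS a₁ a₂ ∧ κ a₁ ≤ b₁ ∧ κ a₂ ≤ b₂))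
    (hmeet : ∀ a₁ a₂ : S, ¬ δS a₁ a₂ → IsGLB {κ a₁, κ a₂} (⊥ : Q)) :
    ∀ a₁ a₂ : S, δS a₁ a₂ ↔ δQ (κ a₁) (κ a₂) := by
  intro a₁ a₂
  refine ⟨fun h ↦ (hδQ _ _).mpr (.inr ⟨a₁, a₂, h, le_rfl, le_rfl⟩), fun h ↦ ?_⟩
  rcases (hδQ _ _).mp h with ⟨q, hq, hq₁, hq₂⟩ | ⟨c₁, c₂, hc, hc₁, hc₂⟩
  · by_contra hn
    exact hq.ne' ((hmeet a₁ a₂ hn).eq_bot_of_le_of_le hq₁ hq₂)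
  · exact hwc.mono hc ((hemb _ _).mpr hc₁) ((hemb _ _).mpr hc₂)

theorem stmt7 {S Q : Type*} [PartialOrder S] [OrderBot S] [PartialOrder Q] [OrderBot Q]
    (δS : S → S → Prop) (hwc : IsWeakContact δS)
    (κ : S → Q) (hemb : ∀ a b : S, a ≤ b ↔ κ a ≤ κ b)
    (hzero : ∀ a : S, κ a = ⊥ ↔ a = ⊥)
    (δQ : Q → Q → Prop)
    (hδQ : ∀ b₁ b₂ : Q, δQ b₁ b₂ ↔
      (∃ q : Q, ⊥ < q ∧ q ≤ b₁ ∧ q ≤ b₂) ∨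
      (∃ a₁ a₂ : S, δS a₁ a₂ ∧ κ a₁ ≤ b₁ ∧ κ a₂ ≤ b₂))
    (hmeet : ∀ a₁ a₂ : S, ¬ δS a₁ a₂ → IsGLB {κ a₁, κ a₂} (⊥ : Q)) :
    ∀ a₁ a₂ : S, δS a₁ a₂ ↔ δQ (κ a₁) (κ a₂) :=
  stmt7_general δS hwc κ hemb δQ hδQ hmeet
end

section
/- For every integer n ≥ 2 there exists a weak contact semilattice S that satisfies (D1+) and satisfies (D2_m) for every positive integer m < n, but does not satisfy (D2_n). -/
/-- Condition (D2_n). -/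
def CondD2 {S : Type*} [SemilatticeSup S] [OrderBot S] (n : ℕ) (δ : S → S → Prop) : Prop :=
  ∀ (a b : S) (c : Fin n → Bool → S),
    (∀ i, ¬ δ (c i false) (c i true)) →
    (∀ f : Fin n → Bool,
      b ≤ Finset.univ.sup (fun i => c i (f i)) ∨ a ≤ Finset.univ.sup (fun i => c i (f i))) →
    ¬ δ b a

open Finset

variable {X : Type*}

def IsUnionOf (G : Set (Set X)) (s : Set X) : Prop :=
  ∀ p ∈ s, ∃ g ∈ G, g ⊆ s ∧ p ∈ g

section IsUnionOf

variable {G : Set (Set X)} {s t g : Set X}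

lemma IsUnionOf.union (hs : IsUnionOf G s) (ht : IsUnionOf G t) : IsUnionOf G (s ∪ t) := by
  rintro p (hp | hp)
  · obtain ⟨g, hg, hgs, hpg⟩ := hs p hp
    exact ⟨g, hg, hgs.trans Set.subset_union_left, hpg⟩
  · obtain ⟨g, hg, hgt, hpg⟩ := ht p hp
    exact ⟨g, hg, hgt.trans Set.subset_union_right, hpg⟩

lemma isUnionOf_empty : IsUnionOf G ∅ := fun _ hp => hp.elim

lemma isUnionOf_of_mem (hg : g ∈ G) : IsUnionOf G g := fun _ hp => ⟨g, hg, subset_rfl, hp⟩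

end IsUnionOf

abbrev UnionsOf (G : Set (Set X)) := {s : Set X // IsUnionOf G s}

namespace UnionsOf

variable {G : Set (Set X)}

instance : SemilatticeSup (UnionsOf G) := Subtype.semilatticeSup fun _ _ => IsUnionOf.union

instance : OrderBot (UnionsOf G) := Subtype.orderBot isUnionOf_empty

def of {g : Set X} (hg : g ∈ G) : UnionsOf G := ⟨g, isUnionOf_of_mem hg⟩

@[simp]
lemma coe_of {g : Set X} (hg : g ∈ G) : ((of hg : UnionsOf G) : Set X) = g := rfl

lemma coe_univ_sup {ι : Type*} [Fintype ι] (f : ι → UnionsOf G) :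
    ((univ.sup f : UnionsOf G) : Set X) = ⋃ i, (f i : Set X) := by
  rw [Finset.sup_coe (Psup := fun _ _ => IsUnionOf.union), Finset.sup_set_eq_biUnion]
  simp

lemma mem_coe_univ_sup {ι : Type*} [Fintype ι] (f : ι → UnionsOf G) (p : X) :
    p ∈ ((univ.sup f : UnionsOf G) : Set X) ↔ ∃ i, p ∈ (f i : Set X) := by
  rw [coe_univ_sup, Set.mem_iUnion]

lemma ne_bot_of_mem {s : UnionsOf G} {p : X} (hp : p ∈ (s : Set X)) : s ≠ ⊥ := by
  rintro rfl
  exact hp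

def contact (A B : Set X) (s t : UnionsOf G) : Prop :=
  ((s : Set X) ∩ t).Nonempty ∨ (A ⊆ s ∧ B ⊆ t) ∨ (B ⊆ s ∧ A ⊆ t)

variable {A B : Set X}

lemma contact.symm {s t : UnionsOf G} : contact A B s t → contact A B t s := by
  rintro (⟨p, hs, ht⟩ | ⟨hA, hB⟩ | ⟨hB, hA⟩)
  exacts [Or.inl ⟨p, ht, hs⟩, Or.inr (Or.inr ⟨hB, hA⟩), Or.inr (Or.inl ⟨hA, hB⟩)]

lemma disjoint_of_not_contact {s t : UnionsOf G} (h : ¬ contact A B s t) :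
    Disjoint (s : Set X) t :=
  Set.disjoint_iff_inter_eq_empty.2 (Set.not_nonempty_iff_eq_empty.1 fun hst => h (Or.inl hst))

lemma isWeakContact_contact (hA : A.Nonempty) (hB : B.Nonempty) :
    IsWeakContact (contact (G := G) A B) := by
  refine ⟨?_, ?_, fun _ _ => contact.symm, ?_⟩
  · rintro s t (⟨p, hs, ht⟩ | ⟨hAs, hBt⟩ | ⟨hBs, hAt⟩)
    · exact ⟨ne_bot_of_mem hs, ne_bot_of_mem ht⟩
    · exact ⟨ne_bot_of_mem (hAs hA.some_mem), ne_bot_of_mem (hBt hB.some_mem)⟩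
    · exact ⟨ne_bot_of_mem (hBs hB.some_mem), ne_bot_of_mem (hAt hA.some_mem)⟩
  · intro s hs
    obtain ⟨p, hp⟩ := Set.nonempty_iff_ne_empty.2 fun h => hs (Subtype.ext h)
    exact Or.inl ⟨p, hp, hp⟩
  · rintro s t s₁ t₁ (⟨p, hs, ht⟩ | ⟨hAs, hBt⟩ | ⟨hBs, hAt⟩) hss₁ htt₁
    · exact Or.inl ⟨p, hss₁ hs, htt₁ ht⟩
    · exact Or.inr (Or.inl ⟨hAs.trans hss₁, hBt.trans htt₁⟩)
    · exact Or.inr (Or.inr ⟨hBs.trans hss₁, hAt.trans htt₁⟩)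

lemma exists_forall_notMem_of_not_contact {ι : Type*} (c : ι → Bool → UnionsOf G)
    (hc : ∀ i, ¬ contact A B (c i false) (c i true)) (p : X) :
    ∃ f : ι → Bool, ∀ i, p ∉ (c i (f i) : Set X) := by
  classical
  refine ⟨fun i => decide (p ∈ (c i false : Set X)), fun i hp => ?_⟩
  by_cases h : p ∈ (c i false : Set X)
  · simp only [h, decide_true] at hp
    exact (disjoint_of_not_contact (hc i)).notMem_of_mem_left h hp
  · simp [h] at hp

lemma condD1plus_contact : CondD1plus (contact (G := G) A B) := by
  intro m _ a b c hc hcover p hp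
  obtain ⟨f, hf⟩ := exists_forall_notMem_of_not_contact c hc p
  rcases hcover f hp with ha | hσ
  · exact ha
  · obtain ⟨i, hi⟩ := (mem_coe_univ_sup _ p).1 hσ
    exact (hf i hi).elim

/-- The overlap case of (D2ₘ) holds automatically, by avoiding a single point. -/
lemma condD2_contact_of_forall_exists (m : ℕ)
    (h : ∀ c : Fin m → Bool → UnionsOf G, (∀ i, ¬ contact A B (c i false) (c i true)) →
      ∃ f : Fin m → Bool, ¬ A ⊆ ((univ.sup fun i => c i (f i) : UnionsOf G) : Set X) ∧
        ¬ B ⊆ ((univ.sup fun i => c i (f i) : UnionsOf G) : Set X)) :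
    CondD2 m (contact (G := G) A B) := by
  intro a b c hc hcover hba
  rcases hba with ⟨p, hpb, hpa⟩ | ⟨hAb, hBa⟩ | ⟨hBb, hAa⟩
  · obtain ⟨f, hf⟩ := exists_forall_notMem_of_not_contact c hc p
    have hp : ∀ s : UnionsOf G, p ∈ (s : Set X) → ¬ s ≤ univ.sup fun i => c i (f i) :=
      fun s hps hs => by
        obtain ⟨i, hi⟩ := (mem_coe_univ_sup _ p).1 (hs hps)
        exact hf i hi
    exact (hcover f).elim (hp b hpb) (hp a hpa)
  · obtain ⟨f, hA, hB⟩ := h c hc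
    exact (hcover f).elim (fun hb => hA (hAb.trans hb)) (fun ha => hB (hBa.trans ha))
  · obtain ⟨f, hA, hB⟩ := h c hc
    exact (hcover f).elim (fun hb => hB (hBb.trans hb)) (fun ha => hA (hAa.trans ha))

end UnionsOf

lemma exists_forall_not_of_subsingleton {α β : Type*} [Fintype α] [Fintype β]
    (hcard : Fintype.card α < Fintype.card β) (R : α → β → Prop)
    (hR : ∀ a, {b | R a b}.Subsingleton) : ∃ b, ∀ a, ¬ R a b := by
  by_contra! h
  choose u hu using h
  have hu_inj : Function.Injective u := fun b b' hbb' => hR (u b) (hu b) (hbb' ▸ hu b')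
  exact (Fintype.card_le_of_injective u hu_inj).not_gt hcard

namespace D2Counterexample

open UnionsOf

variable {n : ℕ}

inductive Point (n : ℕ)
  | x
  | z
  | y (i : Fin n)

open Point

def genA (n : ℕ) : Set (Point n) := {x, z}

def genB (n : ℕ) : Set (Point n) := Set.range y

def genC (i : Fin n) : Bool → Set (Point n)
  | false => {y i, z}
  | true => insert x (y '' {i}ᶜ)

def generators (n : ℕ) : Set (Set (Point n)) :=
  {g | g = genA n ∨ g = genB n ∨ ∃ i ε, g = genC i ε}

lemma genC_mem_generators (i : Fin n) (ε : Bool) : genC i ε ∈ generators n :=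
  Or.inr (Or.inr ⟨i, ε, rfl⟩)

variable {s t : Set (Point n)}

lemma z_mem_or_of_x_mem (hs : IsUnionOf (generators n) s) (hx : x ∈ s) :
    z ∈ s ∨ ∃ k, ∀ l ≠ k, y l ∈ s := by
  obtain ⟨g, hg, hgs, hxg⟩ := hs x hx
  rcases hg with rfl | rfl | ⟨k, _ | _, rfl⟩
  · exact Or.inl (hgs (by simp [genA]))
  · simp [genB] at hxg
  · simp [genC] at hxg
  · exact Or.inr ⟨k, fun l hl => hgs (by simp [genC, hl])⟩

lemma genB_subset_or_of_y_mem (ht : IsUnionOf (generators n) t) {j : Fin n} (hy : y j ∈ t) :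
    genB n ⊆ t ∨ z ∈ t ∨ x ∈ t := by
  obtain ⟨g, hg, hgt, hyg⟩ := ht (y j) hy
  rcases hg with rfl | rfl | ⟨k, _ | _, rfl⟩
  · simp [genA] at hyg
  · exact Or.inl hgt
  · exact Or.inr (Or.inl (hgt (by simp [genC])))
  · exact Or.inr (Or.inr (hgt (by simp [genC])))

lemma contact_of_x_mem_of_y_mem {s t : UnionsOf (generators n)} {j j' : Fin n}
    (hx : x ∈ (s : Set (Point n))) (hj : y j ∈ (t : Set (Point n)))
    (hj' : y j' ∈ (t : Set (Point n))) (hjj' : j ≠ j') : contact (genA n) (genB n) s t := by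
  rcases z_mem_or_of_x_mem s.2 hx with hz | ⟨k, hk⟩
  · rcases genB_subset_or_of_y_mem t.2 hj with hB | hzt | hxt
    · exact Or.inr (Or.inl ⟨Set.insert_subset hx (Set.singleton_subset_iff.2 hz), hB⟩)
    · exact Or.inl ⟨z, hz, hzt⟩
    · exact Or.inl ⟨x, hx, hxt⟩
  · obtain ⟨l, hlk, hl⟩ : ∃ l ≠ k, y l ∈ (t : Set (Point n)) :=
      if hjk : j = k then ⟨j', hjk ▸ hjj'.symm, hj'⟩ else ⟨j, hjk, hj⟩
    exact Or.inl ⟨y l, hk l hlk, hl⟩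

lemma subsingleton_of_not_contact {s t : UnionsOf (generators n)}
    (h : ¬ contact (genA n) (genB n) s t) :
    {j | (x ∈ (s : Set (Point n)) ∨ y j ∈ (s : Set (Point n))) ∧
      (x ∈ (t : Set (Point n)) ∨ y j ∈ (t : Set (Point n)))}.Subsingleton := by
  rintro j ⟨hjs, hjt⟩ j' ⟨hj's, hj't⟩
  by_contra hjj'
  have hst := disjoint_of_not_contact h
  by_cases hxs : x ∈ (s : Set (Point n))
  · have hxt := hst.notMem_of_mem_left hxs
    exact h (contact_of_x_mem_of_y_mem hxs (hjt.resolve_left hxt) (hj't.resolve_left hxt) hjj')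
  by_cases hxt : x ∈ (t : Set (Point n))
  · exact h (contact_of_x_mem_of_y_mem hxt (hjs.resolve_left hxs) (hj's.resolve_left hxs)
      hjj').symm
  · exact hst.notMem_of_mem_left (hjs.resolve_left hxs) (hjt.resolve_left hxt)

lemma condD2_of_lt {m : ℕ} (hmn : m < n) :
    CondD2 m (contact (G := generators n) (genA n) (genB n)) := by
  refine condD2_contact_of_forall_exists m fun c hc => ?_
  obtain ⟨j, hj⟩ := exists_forall_not_of_subsingleton (by simpa using hmn) _
    fun i => subsingleton_of_not_contact (hc i)
  have hside : ∀ i, ∃ ε, x ∉ (c i ε : Set (Point n)) ∧ y j ∉ (c i ε : Set (Point n)) := by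
    intro i
    rcases not_and_or.1 (hj i) with h | h
    exacts [⟨false, not_or.1 h⟩, ⟨true, not_or.1 h⟩]
  choose f hf using hside
  refine ⟨f, fun hA => ?_, fun hB => ?_⟩
  · obtain ⟨i, hi⟩ := (mem_coe_univ_sup _ x).1 (hA (by simp [genA]))
    exact (hf i).1 hi
  · obtain ⟨i, hi⟩ := (mem_coe_univ_sup _ (y j)).1 (hB ⟨j, rfl⟩)
    exact (hf i).2 hi

lemma not_contact_genC (hn : 2 ≤ n) (i : Fin n) :
    ¬ contact (genA n) (genB n) (of (genC_mem_generators i false))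
      (of (genC_mem_generators i true)) := by
  have := Fin.nontrivial_iff_two_le.2 hn
  obtain ⟨k, hk⟩ := exists_ne i
  rintro (⟨p, h0, h1⟩ | ⟨hA, -⟩ | ⟨hB, -⟩)
  · simp only [coe_of, genC] at h0 h1
    rcases h0 with rfl | rfl <;> simp_all
  · simpa [genC] using hA (show x ∈ genA n by simp [genA])
  · simpa [genC, hk] using hB ⟨k, rfl⟩

lemma genB_subset_or_genA_subset (hn : 2 ≤ n) (f : Fin n → Bool) :
    genB n ⊆ ⋃ i, genC i (f i) ∨ genA n ⊆ ⋃ i, genC i (f i) := by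
  have := Fin.nontrivial_iff_two_le.2 hn
  refine or_iff_not_imp_left.2 fun hB => ?_
  obtain ⟨_, ⟨j, rfl⟩, hj⟩ := Set.not_subset.1 hB
  simp only [Set.mem_iUnion, not_exists] at hj
  obtain ⟨k, hk⟩ := exists_ne j
  have hfj : f j = true := by
    by_contra h
    exact hj j (by simp [genC, h])
  have hfk : f k = false := by
    by_contra h
    exact hj k (by simp [genC, h, hk.symm])
  rintro p (rfl | rfl)
  · exact Set.mem_iUnion.2 ⟨j, by simp [hfj, genC]⟩
  · exact Set.mem_iUnion.2 ⟨k, by simp [hfk, genC]⟩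

lemma isWeakContact (hn : 0 < n) :
    IsWeakContact (contact (G := generators n) (genA n) (genB n)) :=
  isWeakContact_contact ⟨x, by simp [genA]⟩ ⟨y ⟨0, hn⟩, ⟨_, rfl⟩⟩

lemma not_condD2 (hn : 2 ≤ n) : ¬ CondD2 n (contact (G := generators n) (genA n) (genB n)) := by
  intro hD2
  refine hD2 (of (G := generators n) (Or.inl rfl)) (of (Or.inr (Or.inl rfl)))
    (fun i ε => of (genC_mem_generators i ε)) (not_contact_genC hn) (fun f => ?_)
    (Or.inr (Or.inr ⟨subset_rfl, subset_rfl⟩))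
  simp only [← Subtype.coe_le_coe, coe_univ_sup, coe_of]
  exact genB_subset_or_genA_subset hn f

end D2Counterexample

open UnionsOf D2Counterexample

theorem stmt8 (n : ℕ) (hn : 2 ≤ n) :
    ∃ (S : Type) (_ : SemilatticeSup S) (_ : OrderBot S) (δ : S → S → Prop),
      IsWeakContact δ ∧
      CondD1plus δ ∧
      (∀ m : ℕ, 0 < m → m < n → CondD2 m δ) ∧
      ¬ CondD2 n δ :=
  ⟨UnionsOf (generators n), inferInstance, inferInstance, contact (genA n) (genB n),
    isWeakContact (by omega), condD1plus_contact, fun _ _ hmn => condD2_of_lt hmn, not_condD2 hn⟩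
end

section
/- Let B be a Boolean algebra, let n be a positive integer, and let c_1, …, c_n ∈ B. Write c_{i,0} = c_i and c_{i,1} = c_iᶜ. Define b̄ = ⨅ { c_{1,f(1)} ⊔ ⋯ ⊔ c_{n,f(n)} : f : {1,…,n} → {0,1}, f(1) + ⋯ + f(n) even } and ā = ⨅ { c_{1,f(1)} ⊔ ⋯ ⊔ c_{n,f(n)} : f : {1,…,n} → {0,1}, f(1) + ⋯ + f(n) odd }. Then b̄ ⊓ ā = 0 and b̄ ⊔ ā = 1; that is, b̄ is the complement of ā in B. Consequently, if n is odd then b̄ = ⨆ { c_{1,f(1)} ⊓ ⋯ ⊓ c_{n,f(n)} : f with f(1) + ⋯ + f(n) even } and ā = ⨆ { c_{1,f(1)} ⊓ ⋯ ⊓ c_{n,f(n)} : f with f(1) + ⋯ + f(n) odd }, and conversely (with even and odd exchanged) if n is even. -/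
/-!
The maxterm `⨆ i, c_{i,f(i)}` is the complement of the minterm `⨅ i, c_{i,¬f(i)}`, so by De Morgan
`b̄` and `ā` are complements of joins of minterms. The minterms are pairwise disjoint and, by
distributivity, join to `⊤`; hence the complement of the join over a set of assignments is the
join over the complementary set. Negating all `n` bits of an assignment flips the parity of its
weight exactly when `n` is odd.
-/

open Finset

theorem even_sum_toNat_not_iff {ι : Type*} [Fintype ι] (g : ι → Bool) :
    Even (∑ i, (!g i).toNat) ↔ (Even (∑ i, (g i).toNat) ↔ Even (Fintype.card ι)) := by
  have hcard : ∑ i, (!g i).toNat + ∑ i, (g i).toNat = Fintype.card ι := by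
    rw [← sum_add_distrib, ← card_univ, card_eq_sum_ones]
    exact sum_congr rfl fun i _ => by cases g i <;> rfl
  rw [← hcard, Nat.even_add]
  tauto

section Minterms

variable {ι B : Type*} [Fintype ι]

section Lattice

variable [Lattice B] [BoundedOrder B]

def minterm (ℓ : ι → Bool → B) (g : ι → Bool) : B := univ.inf fun i => ℓ i (g i)

def maxterm (ℓ : ι → Bool → B) (f : ι → Bool) : B := univ.sup fun i => ℓ i (f i)

theorem disjoint_minterm {ℓ : ι → Bool → B} (hℓ : ∀ i, Disjoint (ℓ i false) (ℓ i true))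
    {g g' : ι → Bool} (h : g ≠ g') : Disjoint (minterm ℓ g) (minterm ℓ g') := by
  obtain ⟨i, hi⟩ := Function.ne_iff.mp h
  have hi' : Disjoint (ℓ i (g i)) (ℓ i (g' i)) := by
    cases hg : g i <;> cases hg' : g' i <;> simp_all [(hℓ i).symm]
  exact hi'.mono (inf_le (mem_univ i)) (inf_le (mem_univ i))

end Lattice

theorem compl_maxterm [BooleanAlgebra B] {ℓ : ι → Bool → B}
    (hℓ : ∀ i, IsCompl (ℓ i false) (ℓ i true)) (f : ι → Bool) :
    (maxterm ℓ f)ᶜ = minterm ℓ fun i => !f i := by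
  rw [maxterm, Finset.compl_sup]
  refine inf_congr rfl fun i _ => ?_
  change _ = ℓ i !f i
  cases f i
  exacts [(hℓ i).compl_eq, (hℓ i).symm.compl_eq]

variable [DecidableEq ι]

theorem sup_minterm_univ [DistribLattice B] [BoundedOrder B] {ℓ : ι → Bool → B}
    (hℓ : ∀ i, Codisjoint (ℓ i false) (ℓ i true)) : univ.sup (minterm ℓ) = ⊤ := by
  refine top_le_iff.mp ?_
  calc (⊤ : B) = univ.inf fun i => univ.sup (ℓ i) := by
        simp [Fintype.univ_bool, codisjoint_iff.mp (hℓ _).symm]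
    _ = (univ.pi fun _ => univ).sup fun g => univ.attach.inf fun i => ℓ i.1 (g i.1 i.2) :=
        inf_sup _ _ _
    _ ≤ univ.sup (minterm ℓ) := Finset.sup_le fun g _ =>
        (inf_attach univ fun i => ℓ i (g i (mem_univ i))).le.trans
          (le_sup (f := minterm ℓ) (mem_univ _))

theorem isCompl_sup_minterm_filter [DistribLattice B] [BoundedOrder B] {ℓ : ι → Bool → B}
    (hℓ : ∀ i, IsCompl (ℓ i false) (ℓ i true)) (p : (ι → Bool) → Prop) [DecidablePred p] :
    IsCompl ((univ.filter p).sup (minterm ℓ)) ((univ.filter fun g => ¬p g).sup (minterm ℓ)) where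
  disjoint := by
    refine Finset.disjoint_sup_left.mpr fun g hg => Finset.disjoint_sup_right.mpr fun g' hg' => ?_
    refine disjoint_minterm (fun i => (hℓ i).disjoint) ?_
    rintro rfl
    exact (mem_filter.mp hg').2 (mem_filter.mp hg).2
  codisjoint := by
    rw [codisjoint_iff, ← sup_union, filter_union_filter_not_eq]
    exact sup_minterm_univ fun i => (hℓ i).codisjoint

theorem inf_maxterm_filter [BooleanAlgebra B] {ℓ : ι → Bool → B}
    (hℓ : ∀ i, IsCompl (ℓ i false) (ℓ i true)) (p : (ι → Bool) → Prop) [DecidablePred p] :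
    (univ.filter p).inf (maxterm ℓ) = (univ.filter fun g => ¬p fun i => !g i).sup (minterm ℓ) := by
  let neg : (ι → Bool) ≃ (ι → Bool) := Equiv.piCongrRight fun _ => Equiv.boolNot
  have hneg : univ.filter (fun g => p fun i => !g i) = (univ.filter p).map neg.toEmbedding := by
    rw [map_filter, map_univ_equiv]; rfl
  rw [← (isCompl_sup_minterm_filter hℓ fun g => p fun i => !g i).compl_eq, hneg, sup_map,
    Finset.compl_sup]
  refine inf_congr rfl fun f _ => ?_
  change maxterm ℓ f = (minterm ℓ fun i => !f i)ᶜ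
  rw [← compl_maxterm hℓ, compl_compl]

end Minterms

theorem stmt9_general {B : Type*} [BooleanAlgebra B] (n : ℕ) (c : Fin n → B)
    (cc : Fin n → Bool → B)
    (hcc0 : ∀ i, cc i false = c i) (hcc1 : ∀ i, cc i true = (c i)ᶜ)
    (bbar abar : B)
    (hbbar : bbar =
      (Finset.univ.filter fun f : Fin n → Bool => Even (∑ i, (f i).toNat)).inf
        (fun f => Finset.univ.sup fun i => cc i (f i)))
    (habar : abar =
      (Finset.univ.filter fun f : Fin n → Bool => Odd (∑ i, (f i).toNat)).inf
        (fun f => Finset.univ.sup fun i => cc i (f i))) :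
    bbar ⊓ abar = ⊥ ∧ bbar ⊔ abar = ⊤ ∧ bbar = abarᶜ ∧
    (Odd n →
      bbar = (Finset.univ.filter fun f : Fin n → Bool => Even (∑ i, (f i).toNat)).sup
        (fun f => Finset.univ.inf fun i => cc i (f i)) ∧
      abar = (Finset.univ.filter fun f : Fin n → Bool => Odd (∑ i, (f i).toNat)).sup
        (fun f => Finset.univ.inf fun i => cc i (f i))) ∧
    (Even n →
      bbar = (Finset.univ.filter fun f : Fin n → Bool => Odd (∑ i, (f i).toNat)).sup
        (fun f => Finset.univ.inf fun i => cc i (f i)) ∧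
      abar = (Finset.univ.filter fun f : Fin n → Bool => Even (∑ i, (f i).toNat)).sup
        (fun f => Finset.univ.inf fun i => cc i (f i))) := by
  have hcc : ∀ i, IsCompl (cc i false) (cc i true) := fun i => by
    rw [hcc0, hcc1]; exact isCompl_compl
  have hb : bbar = (univ.filter fun g : Fin n → Bool => ¬Even (∑ i, (!g i).toNat)).sup
      (minterm cc) := hbbar.trans (inf_maxterm_filter hcc _)
  have ha : abar = (univ.filter fun g : Fin n → Bool => Even (∑ i, (!g i).toNat)).sup
      (minterm cc) := by
    simpa only [Nat.not_odd_iff_even] using habar.trans (inf_maxterm_filter hcc _)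
  have hba : IsCompl bbar abar := by
    simpa only [hb, ha, not_not] using (isCompl_sup_minterm_filter hcc _).symm
  refine ⟨hba.inf_eq_bot, hba.sup_eq_top, hba.eq_compl, fun hodd => ⟨?_, ?_⟩,
    fun heven => ⟨?_, ?_⟩⟩
  all_goals
    first | rw [hb] | rw [ha]
    congr 1
    refine filter_congr fun g _ => ?_
    have hparity := even_sum_toNat_not_iff g
    simp only [← Nat.not_even_iff_odd, Fintype.card_fin] at *
    tauto

theorem stmt9 {B : Type*} [BooleanAlgebra B] (n : ℕ) (hn : 0 < n) (c : Fin n → B)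
    (cc : Fin n → Bool → B)
    (hcc0 : ∀ i, cc i false = c i) (hcc1 : ∀ i, cc i true = (c i)ᶜ)
    (bbar abar : B)
    (hbbar : bbar =
      (Finset.univ.filter fun f : Fin n → Bool => Even (∑ i, (f i).toNat)).inf
        (fun f => Finset.univ.sup fun i => cc i (f i)))
    (habar : abar =
      (Finset.univ.filter fun f : Fin n → Bool => Odd (∑ i, (f i).toNat)).inf
        (fun f => Finset.univ.sup fun i => cc i (f i))) :
    bbar ⊓ abar = ⊥ ∧ bbar ⊔ abar = ⊤ ∧ bbar = abarᶜ ∧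
    (Odd n →
      bbar = (Finset.univ.filter fun f : Fin n → Bool => Even (∑ i, (f i).toNat)).sup
        (fun f => Finset.univ.inf fun i => cc i (f i)) ∧
      abar = (Finset.univ.filter fun f : Fin n → Bool => Odd (∑ i, (f i).toNat)).sup
        (fun f => Finset.univ.inf fun i => cc i (f i))) ∧
    (Even n →
      bbar = (Finset.univ.filter fun f : Fin n → Bool => Odd (∑ i, (f i).toNat)).sup
        (fun f => Finset.univ.inf fun i => cc i (f i)) ∧
      abar = (Finset.univ.filter fun f : Fin n → Bool => Even (∑ i, (f i).toNat)).sup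
        (fun f => Finset.univ.inf fun i => cc i (f i))) :=
  stmt9_general n c cc hcc0 hcc1 bbar abar hbbar habar
end

section
/- Let n ≥ 2 and realize the free Boolean algebra on n generators as the powerset of the set of functions Fin n → Bool, with generators c_{i,0} = { g : Fin n → Bool | g(i) = false } and their complements c_{i,1} = { g | g(i) = true } for i = 1, …, n. Define b̄ = ⋂ { c_{1,f(1)} ∪ ⋯ ∪ c_{n,f(n)} : f : {1,…,n} → {0,1} with f(1)+⋯+f(n) even } and ā = ⋂ { c_{1,f(1)} ∪ ⋯ ∪ c_{n,f(n)} : f with f(1)+⋯+f(n) odd }. Then the 2n + 2 elements c_{1,0}, …, c_{n,0}, c_{1,1}, …, c_{n,1}, ā, b̄ are pairwise incomparable under inclusion (no one is a subset of another, and they are pairwise distinct). -/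
/-!
Each union `⋃ i, c_{i, f i}` omits exactly one point of `Fin n → Bool`, namely `!f`, so `ā` is the
set of `g` for which `!g` has an even number of `true` entries and `b̄` is its complement. Flipping
one coordinate toggles that parity, so for `n ≥ 2` every generator `c_{i,b}` meets both `ā` and `b̄`
(flip a coordinate other than `i`). Distinct generators are incomparable, and a set which, like its
complement, meets every generator is incomparable with each generator and with its complement.
-/

open Function Set

variable {ι : Type*}

theorem iUnion_setOf_apply_eq (f : ι → Bool) :
    ⋃ i, {g : ι → Bool | g i = f i} = {fun i => !f i}ᶜ := by
  ext g
  simp [funext_iff]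

theorem iInter_iUnion_setOf_apply_eq (P : (ι → Bool) → Prop) :
    ⋂ (f) (_ : P f), ⋃ i, {g : ι → Bool | g i = f i} = {g | ¬ P fun i => !g i} := by
  ext g
  simp only [iUnion_setOf_apply_eq, mem_iInter, mem_compl_singleton_iff, mem_ofPred_eq]
  refine ⟨fun h hP => h _ hP (by simp), ?_⟩
  rintro h f hP rfl
  simp only [Bool.not_not] at h
  exact h hP

theorem setOf_apply_eq_subset_iff {i j : ι} {b c : Bool} :
    {g : ι → Bool | g i = b} ⊆ {g | g j = c} ↔ i = j ∧ b = c := by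
  classical
  refine ⟨fun h => ?_, by rintro ⟨rfl, rfl⟩; rfl⟩
  by_contra hne
  have := @h (fun k => if k = i then b else !c) (by simp)
  by_cases hji : j = i <;> simp_all

theorem not_setOf_apply_eq_subset {T : Set (ι → Bool)} {i : ι} {b : Bool}
    (h : ∃ g ∉ T, g i = b) : ¬ {g : ι → Bool | g i = b} ⊆ T :=
  let ⟨_, hgT, hgi⟩ := h
  fun hsub => hgT (hsub hgi)

theorem not_subset_setOf_apply_eq {T : Set (ι → Bool)} {j : ι} {c : Bool}
    (h : ∃ g ∈ T, g j = !c) : ¬ T ⊆ {g : ι → Bool | g j = c} := by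
  obtain ⟨g, hgT, hgj⟩ := h
  intro hsub
  simpa [hgj] using hsub hgT

def SplitsCylinders (S : Set (ι → Bool)) : Prop :=
  ∀ i b, (∃ g ∈ S, g i = b) ∧ ∃ g ∉ S, g i = b

theorem SplitsCylinders.compl {S : Set (ι → Bool)} (hS : SplitsCylinders S) :
    SplitsCylinders Sᶜ := fun i b => by
  simpa [and_comm] using hS i b

theorem splitsCylinders_of_flip [DecidableEq ι] {S : Set (ι → Bool)}
    (hflip : ∀ i, ∃ j ≠ i, ∀ g, update g j (!g j) ∈ S ↔ g ∉ S) : SplitsCylinders S := by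
  intro i b
  obtain ⟨j, hji, hj⟩ := hflip i
  have hi : update (fun _ => b) j (!b) i = b := update_of_ne hji.symm _ _
  by_cases h : (fun _ => b) ∈ S
  · exact ⟨⟨_, h, rfl⟩, _, (hj _).not.mpr (not_not.mpr h), hi⟩
  · exact ⟨⟨_, (hj _).mpr h, hi⟩, _, h, rfl⟩

theorem even_sum_not_update_not_iff [Fintype ι] [DecidableEq ι] (g : ι → Bool) (j : ι) :
    Even (∑ k, (!update g j (!g j) k).toNat) ↔ ¬ Even (∑ k, (!g k).toNat) := by
  have hupd : (fun k => (!update g j (!g j) k).toNat) =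
      update (fun k => (!g k).toNat) j (g j).toNat := by
    ext k
    by_cases hk : k = j <;> simp [hk]
  rw [hupd, Finset.sum_update_of_mem (Finset.mem_univ j),
    Finset.sum_eq_add_sum_sdiff_singleton_of_mem (Finset.mem_univ j)]
  cases g j <;> simp [parity_simps]

theorem splitsCylinders_even_sum_not [Fintype ι] [Nontrivial ι] :
    SplitsCylinders {g : ι → Bool | Even (∑ k, (!g k).toNat)} := by
  classical
  exact splitsCylinders_of_flip fun i =>
    let ⟨j, hji⟩ := exists_ne i
    ⟨j, hji, fun g => even_sum_not_update_not_iff g j⟩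

def cylinderFamily (S : Set (ι → Bool)) : (ι × Bool) ⊕ Bool → Set (ι → Bool)
  | .inl (i, b) => {g | g i = b}
  | .inr false => S
  | .inr true => Sᶜ

theorem cylinderFamily_not_subset [Nonempty ι] {S : Set (ι → Bool)} (hS : SplitsCylinders S) :
    ∀ p q, p ≠ q → ¬ cylinderFamily S p ⊆ cylinderFamily S q := by
  have hSc := hS.compl
  obtain ⟨g, hgS, -⟩ := (hS (Classical.arbitrary ι) true).1
  obtain ⟨g', hg'S, -⟩ := (hS (Classical.arbitrary ι) true).2
  rintro (⟨i, b⟩ | _ | _) (⟨j, c⟩ | _ | _) hpq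
  all_goals simp only [cylinderFamily]
  · rw [setOf_apply_eq_subset_iff]
    rintro ⟨rfl, rfl⟩
    exact hpq rfl
  · exact not_setOf_apply_eq_subset (hS i b).2
  · exact not_setOf_apply_eq_subset (hSc i b).2
  · exact not_subset_setOf_apply_eq (hS j !c).1
  · exact (hpq rfl).elim
  · exact fun hsub => hsub hgS hgS
  · exact not_subset_setOf_apply_eq (hSc j !c).1
  · exact fun hsub => hg'S (hsub hg'S)
  · exact (hpq rfl).elim

theorem stmt10 (n : ℕ) (hn : 2 ≤ n)
    (cc : Fin n → Bool → Set (Fin n → Bool))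
    (hcc : ∀ i b, cc i b = {g : Fin n → Bool | g i = b})
    (bbar abar : Set (Fin n → Bool))
    (hbbar : bbar =
      ⋂ (f : Fin n → Bool) (_ : Even (∑ i, (f i).toNat)), ⋃ i : Fin n, cc i (f i))
    (habar : abar =
      ⋂ (f : Fin n → Bool) (_ : Odd (∑ i, (f i).toNat)), ⋃ i : Fin n, cc i (f i))
    (e : (Fin n × Bool) ⊕ Bool → Set (Fin n → Bool))
    (he1 : ∀ i b, e (Sum.inl (i, b)) = cc i b)
    (he2 : e (Sum.inr false) = abar) (he3 : e (Sum.inr true) = bbar) :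
    ∀ p q : (Fin n × Bool) ⊕ Bool, p ≠ q → ¬ e p ⊆ e q := by
  have : Nontrivial (Fin n) := Fin.nontrivial_iff_two_le.mpr hn
  obtain rfl : cc = fun i b => {g | g i = b} := funext₂ hcc
  have habar' : abar = {g | Even (∑ k, (!g k).toNat)} := by
    simp only [habar, iInter_iUnion_setOf_apply_eq, Nat.not_odd_iff_even]
  have hbbar' : bbar = abarᶜ := by
    simp only [hbbar, habar', iInter_iUnion_setOf_apply_eq]
    rfl
  have he : e = cylinderFamily abar := by
    funext p
    rcases p with ⟨i, b⟩ | _ | _ <;> simp only [cylinderFamily, he1, he2, he3, hbbar']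
  rw [he, habar']
  exact cylinderFamily_not_subset splitsCylinders_even_sum_not
end

section
/- Let L be the first-order language with one binary function symbol +, one constant symbol 0, and one binary relation symbol δ. There is no L-sentence ψ (equivalently, no finite set of L-sentences) whose models are exactly the Ivanova Contact join-semilattices, i.e., the L-structures S in which + is a semilattice join with least element 0, δ is a weak contact relation, and S satisfies (D1) and (D2_n) for every positive integer n. -/
open FirstOrder FirstOrder.Language

/-- Function symbols of the language of contact semilattices:
a constant `0` and a binary operation `+`. -/
inductive CSFunc : ℕ → Type
  | zero : CSFunc 0
  | plus : CSFunc 2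

/-- Relation symbols of the language of contact semilattices:
a binary relation `δ`. -/
inductive CSRel : ℕ → Type
  | delta : CSRel 2

/-- The first-order language with a binary function symbol `+`, a constant `0`
and a binary relation symbol `δ`. -/
def csLang : FirstOrder.Language := ⟨CSFunc, CSRel⟩

section Interpretation

variable (M : Type) [csLang.Structure M]

/-- Interpretation of `+`. -/
def mAdd (a b : M) : M := Structure.funMap (L := csLang) CSFunc.plus ![a, b]

/-- Interpretation of `0`. -/
def mZero : M := Structure.funMap (L := csLang) CSFunc.zero ![]

/-- Interpretation of `δ`. -/
def mDelta (a b : M) : Prop := Structure.RelMap (L := csLang) CSRel.delta ![a, b]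

/-- The induced order: `a ≤ b` iff `a + b = b`. -/
def mLe (a b : M) : Prop := mAdd M a b = b

/-- Finite sums `c₁ + ⋯ + cₖ` (with value `0` for the empty list). -/
def mSum (l : List M) : M := l.foldr (mAdd M) (mZero M)

/-- `M` is an Ivanova Contact join-semilattice: `+` is a semilattice join with least
element `0`, `δ` is a weak contact relation, and (D1) and (D2_n) hold for every
positive integer `n`. -/
def IsIvanova : Prop :=
  -- semilattice axioms
  (∀ a b c : M, mAdd M a (mAdd M b c) = mAdd M (mAdd M a b) c) ∧
  (∀ a b : M, mAdd M a b = mAdd M b a) ∧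
  (∀ a : M, mAdd M a a = a) ∧
  -- 0 is a least element
  (∀ a : M, mAdd M (mZero M) a = a) ∧
  -- weak contact axioms
  (∀ a b : M, mDelta M a b → a ≠ mZero M ∧ b ≠ mZero M) ∧
  (∀ a : M, a ≠ mZero M → mDelta M a a) ∧
  (∀ a b : M, mDelta M a b → mDelta M b a) ∧
  (∀ a b a₁ b₁ : M, mDelta M a b → mLe M a a₁ → mLe M b b₁ → mDelta M a₁ b₁) ∧
  -- (D1)
  (∀ a b c₀ c₁ : M, ¬ mDelta M c₀ c₁ →
    mLe M b (mAdd M a c₀) → mLe M b (mAdd M a c₁) → mLe M b a) ∧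
  -- (D2_n) for every positive integer n
  (∀ n : ℕ, 0 < n → ∀ (a b : M) (c : Fin n → Bool → M),
    (∀ i, ¬ mDelta M (c i false) (c i true)) →
    (∀ f : Fin n → Bool,
      mLe M b (mSum M (List.ofFn fun i => c i (f i))) ∨
      mLe M a (mSum M (List.ofFn fun i => c i (f i)))) →
    ¬ mDelta M b a)

end Interpretation

/-!
For `N ≥ 2` let `ParityCube N` be the join-semilattice of subsets of the cube `{0,1}^N` generated
under union by the two parity classes and the `2N` half-cubes `{x | x j = b}`, where two sets are in
contact when they overlap or one contains one parity class and the other the other one. It is a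
contact join-semilattice satisfying (D1), and (D2_n) holds for `n < N`: of two admissible sets out
of contact, one is empty or they are opposite half-cubes, so one of them lies in a half-cube
`{x | x j = 1}`, and fewer than `N` of these miss a point of each parity. (D2_N) fails, because
the half-cubes `{x | x i = f i}` cover every point but one, hence a whole parity class. A
nonprincipal ultraproduct of the `ParityCube (k + 2)` therefore satisfies every (D2_n) and is
Ivanova, while by Łoś's theorem a sentence true in it is true in some `ParityCube (k + 2)`, which
is not.
-/

open Filter

section Axioms

variable (M : Type) [csLang.Structure M]

structure IsD1ContactSemilattice : Prop where
  add_assoc : ∀ a b c : M, mAdd M a (mAdd M b c) = mAdd M (mAdd M a b) c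
  add_comm : ∀ a b : M, mAdd M a b = mAdd M b a
  add_self : ∀ a : M, mAdd M a a = a
  zero_add : ∀ a : M, mAdd M (mZero M) a = a
  ne_zero_of_delta : ∀ a b : M, mDelta M a b → a ≠ mZero M ∧ b ≠ mZero M
  delta_self : ∀ a : M, a ≠ mZero M → mDelta M a a
  delta_symm : ∀ a b : M, mDelta M a b → mDelta M b a
  delta_mono : ∀ a b a₁ b₁ : M, mDelta M a b → mLe M a a₁ → mLe M b b₁ → mDelta M a₁ b₁
  d1 : ∀ a b c₀ c₁ : M, ¬ mDelta M c₀ c₁ →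
    mLe M b (mAdd M a c₀) → mLe M b (mAdd M a c₁) → mLe M b a

def D2 (n : ℕ) : Prop :=
  ∀ (a b : M) (c : Fin n → Bool → M),
    (∀ i, ¬ mDelta M (c i false) (c i true)) →
    (∀ f : Fin n → Bool,
      mLe M b (mSum M (List.ofFn fun i => c i (f i))) ∨
      mLe M a (mSum M (List.ofFn fun i => c i (f i)))) →
    ¬ mDelta M b a

theorem isIvanova_iff :
    IsIvanova M ↔ IsD1ContactSemilattice M ∧ ∀ n, 0 < n → D2 M n :=
  ⟨fun ⟨h₁, h₂, h₃, h₄, h₅, h₆, h₇, h₈, h₉, h₁₀⟩ => ⟨⟨h₁, h₂, h₃, h₄, h₅, h₆, h₇, h₈, h₉⟩, h₁₀⟩,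
    fun ⟨⟨h₁, h₂, h₃, h₄, h₅, h₆, h₇, h₈, h₉⟩, h₁₀⟩ => ⟨h₁, h₂, h₃, h₄, h₅, h₆, h₇, h₈, h₉, h₁₀⟩⟩

theorem mSum_cons (a : M) (l : List M) : mSum M (a :: l) = mAdd M a (mSum M l) := rfl

end Axioms

namespace Filter.Product

variable {ι : Type} {l : Filter ι} {u : Ultrafilter ι} {M : ι → Type}

/- The coercion `(g : l.Product M)` elaborates at type `Quotient _` rather than `l.Product M`,
which defeats `rw` and `simp`; `ofFun` pins the type. -/
def ofFun (g : ∀ i, M i) : l.Product M := g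

theorem forall_ofFun {p : l.Product M → Prop} : (∀ x, p x) ↔ ∀ g, p (ofFun g) :=
  ⟨fun h g => h (ofFun g), fun h x => Quotient.inductionOn' x h⟩

theorem ofFun_eq_ofFun {g h : ∀ i, M i} :
    (ofFun g : l.Product M) = ofFun h ↔ ∀ᶠ i in l, g i = h i :=
  Quotient.eq'

theorem exists_ofFun_eq (x : l.Product M) : ∃ g, ofFun g = x :=
  Quotient.inductionOn' x fun g => ⟨g, rfl⟩

variable [∀ i, csLang.Structure (M i)]

theorem mAdd_ofFun (g h : ∀ i, M i) :
    mAdd ((u : Filter ι).Product M) (ofFun g) (ofFun h) =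
      ofFun fun i => mAdd (M i) (g i) (h i) := by
  have hv : (![ofFun g, ofFun h] : Fin 2 → (u : Filter ι).Product M) = fun j => ↑(![g, h] j) := by
    funext j; fin_cases j <;> rfl
  refine (congrArg _ hv).trans ((Ultraproduct.funMap_cast (L := csLang) CSFunc.plus _).trans ?_)
  congr 1; funext i; congr 1; funext j; fin_cases j <;> rfl

theorem mZero_eq : mZero ((u : Filter ι).Product M) = ofFun fun i => mZero (M i) := by
  have hv : (![] : Fin 0 → (u : Filter ι).Product M) = fun j => ↑((![] : Fin 0 → ∀ i, M i) j) :=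
    funext fun j => j.elim0
  refine (congrArg _ hv).trans ((Ultraproduct.funMap_cast (L := csLang) CSFunc.zero _).trans ?_)
  congr 1; funext i; congr 1; funext j; exact j.elim0

theorem mDelta_ofFun (g h : ∀ i, M i) :
    mDelta ((u : Filter ι).Product M) (ofFun g) (ofFun h) ↔
      ∀ᶠ i in u, mDelta (M i) (g i) (h i) := by
  have hv : (![ofFun g, ofFun h] : Fin 2 → (u : Filter ι).Product M) = fun j => ⟦![g, h] j⟧ := by
    funext j; fin_cases j <;> rfl
  refine (iff_of_eq (congrArg _ hv)).trans
    ((relMap_quotient_mk' (L := csLang) _ CSRel.delta _).trans ?_)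
  refine eventually_congr (Eventually.of_forall fun i => iff_of_eq ?_)
  congr 1; funext j; fin_cases j <;> rfl

theorem mLe_ofFun (g h : ∀ i, M i) :
    mLe ((u : Filter ι).Product M) (ofFun g) (ofFun h) ↔ ∀ᶠ i in u, mLe (M i) (g i) (h i) := by
  unfold mLe; rw [mAdd_ofFun, ofFun_eq_ofFun]

theorem mSum_ofFn_ofFun {n : ℕ} (c : Fin n → ∀ i, M i) :
    mSum ((u : Filter ι).Product M) (List.ofFn fun k => ofFun (c k)) =
      ofFun fun i => mSum (M i) (List.ofFn fun k => c k i) := by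
  induction n with
  | zero => exact mZero_eq
  | succ n ih =>
    simp only [List.ofFn_succ, mSum_cons]
    rw [ih, mAdd_ofFun]

theorem isD1ContactSemilattice (h : ∀ᶠ i in u, IsD1ContactSemilattice (M i)) :
    IsD1ContactSemilattice ((u : Filter ι).Product M) where
  add_assoc := by
    simp only [forall_ofFun, mAdd_ofFun, ofFun_eq_ofFun]
    exact fun a b c => h.mono fun i hi => hi.add_assoc _ _ _
  add_comm := by
    simp only [forall_ofFun, mAdd_ofFun, ofFun_eq_ofFun]
    exact fun a b => h.mono fun i hi => hi.add_comm _ _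
  add_self := by
    simp only [forall_ofFun, mAdd_ofFun, ofFun_eq_ofFun]
    exact fun a => h.mono fun i hi => hi.add_self _
  zero_add := by
    simp only [forall_ofFun, mZero_eq, mAdd_ofFun, ofFun_eq_ofFun]
    exact fun a => h.mono fun i hi => hi.zero_add _
  ne_zero_of_delta := by
    simp only [forall_ofFun, mDelta_ofFun, mZero_eq, ne_eq, ofFun_eq_ofFun,
      ← Ultrafilter.eventually_not, ← eventually_and, ← Ultrafilter.eventually_imp]
    exact fun a b => h.mono fun i hi => hi.ne_zero_of_delta _ _
  delta_self := by
    simp only [forall_ofFun, mDelta_ofFun, mZero_eq, ne_eq, ofFun_eq_ofFun,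
      ← Ultrafilter.eventually_not, ← Ultrafilter.eventually_imp]
    exact fun a => h.mono fun i hi => hi.delta_self _
  delta_symm := by
    simp only [forall_ofFun, mDelta_ofFun, ← Ultrafilter.eventually_imp]
    exact fun a b => h.mono fun i hi => hi.delta_symm _ _
  delta_mono := by
    simp only [forall_ofFun, mDelta_ofFun, mLe_ofFun, ← Ultrafilter.eventually_imp]
    exact fun a b a₁ b₁ => h.mono fun i hi => hi.delta_mono _ _ _ _
  d1 := by
    simp only [forall_ofFun, mDelta_ofFun, mAdd_ofFun, mLe_ofFun, ← Ultrafilter.eventually_not,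
      ← Ultrafilter.eventually_imp]
    exact fun a b c₀ c₁ => h.mono fun i hi => hi.d1 _ _ _ _

theorem d2 {n : ℕ} (h : ∀ᶠ i in u, D2 (M i) n) : D2 ((u : Filter ι).Product M) n := by
  intro a b c hsep hcov
  obtain ⟨a, rfl⟩ := exists_ofFun_eq a
  obtain ⟨b, rfl⟩ := exists_ofFun_eq b
  choose c' hc' using fun k e => exists_ofFun_eq (c k e)
  obtain rfl : c = fun k e => ofFun (c' k e) := funext₂ fun k e => (hc' k e).symm
  simp only [mDelta_ofFun, ← Ultrafilter.eventually_not] at hsep ⊢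
  simp only [mSum_ofFn_ofFun, mLe_ofFun, ← Ultrafilter.eventually_or] at hcov
  filter_upwards [h, eventually_all.2 hsep, eventually_all.2 hcov] with i hi
  exact hi (a i) (b i) fun k e => c' k e i

theorem isIvanova (hbase : ∀ᶠ i in u, IsD1ContactSemilattice (M i))
    (hd2 : ∀ n, 0 < n → ∀ᶠ i in u, D2 (M i) n) : IsIvanova ((u : Filter ι).Product M) :=
  (isIvanova_iff _).2 ⟨isD1ContactSemilattice hbase, fun n hn => d2 (hd2 n hn)⟩

end Filter.Product

namespace ParityCube

open Set

theorem zmod_two_eq_or_eq_add_one (a b : ZMod 2) : a = b ∨ a = b + 1 := by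
  decide +revert

variable {N : ℕ}

def parity (x : Fin N → Bool) : ZMod 2 := ∑ j, ((x j).toNat : ZMod 2)

def flipAt (x : Fin N → Bool) (j : Fin N) : Fin N → Bool := Function.update x j (!x j)

theorem parity_flipAt (x : Fin N → Bool) (j : Fin N) : parity (flipAt x j) = parity x + 1 := by
  unfold parity flipAt
  have hrest : ∑ k ∈ Finset.univ.erase j, ((Function.update x j (!x j) k).toNat : ZMod 2) =
      ∑ k ∈ Finset.univ.erase j, ((x k).toNat : ZMod 2) :=
    Finset.sum_congr rfl fun k hk => by rw [Function.update_of_ne (Finset.ne_of_mem_erase hk)]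
  rw [← Finset.add_sum_erase _ _ (Finset.mem_univ j),
    ← Finset.add_sum_erase _ _ (Finset.mem_univ j), Function.update_self, hrest]
  generalize ∑ k ∈ Finset.univ.erase j, ((x k).toNat : ZMod 2) = S
  generalize x j = b
  revert b S
  decide

theorem exists_parity_eq_of_flipAt_mem {s : Set (Fin N → Bool)} {x : Fin N → Bool} {j : Fin N}
    (hx : x ∈ s) (hfx : flipAt x j ∈ s) (e : ZMod 2) : ∃ y ∈ s, parity y = e := by
  rcases zmod_two_eq_or_eq_add_one e (parity x) with rfl | rfl
  · exact ⟨x, hx, rfl⟩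
  · exact ⟨flipAt x j, hfx, parity_flipAt x j⟩

def parityClass (e : ZMod 2) : Set (Fin N → Bool) := {x | parity x = e}

def half (j : Fin N) (b : Bool) : Set (Fin N → Bool) := {x | x j = b}

theorem half_disjoint_iff {j k : Fin N} {b b' : Bool} :
    Disjoint (half j b) (half k b') ↔ j = k ∧ b ≠ b' := by
  constructor
  · intro h
    by_contra hjk
    have hx : Function.update (fun _ => b) k b' ∈ half j b := by
      by_cases hj : j = k
      · subst hj
        simpa [half] using (not_and_not_right.1 hjk rfl).symm
      · exact Function.update_of_ne hj ..
    exact disjoint_left.1 h hx (Function.update_self ..)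
  · rintro ⟨rfl, hb⟩
    exact disjoint_left.2 fun x h₁ h₂ => hb (h₁.symm.trans h₂)

inductive Admissible : Set (Fin N → Bool) → Prop
  | empty : Admissible ∅
  | parityClass (e : ZMod 2) : Admissible (parityClass e)
  | half (j : Fin N) (b : Bool) : Admissible (half j b)
  | union {s t : Set (Fin N → Bool)} : Admissible s → Admissible t → Admissible (s ∪ t)

def Contact (s t : Set (Fin N → Bool)) : Prop :=
  (s ∩ t).Nonempty ∨ ∃ e, parityClass e ⊆ s ∧ parityClass (e + 1) ⊆ t

theorem Contact.symm {s t : Set (Fin N → Bool)} : Contact s t → Contact t s := by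
  rintro (⟨x, hs, ht⟩ | ⟨e, hs, ht⟩)
  · exact Or.inl ⟨x, ht, hs⟩
  · refine Or.inr ⟨e + 1, ht, ?_⟩
    rwa [add_assoc, CharTwo.add_self_eq_zero, add_zero]

theorem Contact.mono {s t s' t' : Set (Fin N → Bool)} (h : Contact s t) (hs : s ⊆ s')
    (ht : t ⊆ t') : Contact s' t' := by
  rcases h with ⟨x, hxs, hxt⟩ | ⟨e, hes, het⟩
  · exact Or.inl ⟨x, hs hxs, ht hxt⟩
  · exact Or.inr ⟨e, hes.trans hs, het.trans ht⟩

theorem disjoint_of_not_contact {s t : Set (Fin N → Bool)} (h : ¬ Contact s t) : Disjoint s t :=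
  disjoint_iff_inter_eq_empty.2 (not_nonempty_iff_eq_empty.1 fun hst => h (Or.inl hst))

theorem exists_parityClass_subset_or_locally_half {s : Set (Fin N → Bool)}
    (hs : Admissible s) : (∃ e, parityClass e ⊆ s) ∨ ∀ x ∈ s, ∃ j, half j (x j) ⊆ s := by
  induction hs with
  | empty => exact Or.inr fun x hx => hx.elim
  | parityClass e => exact Or.inl ⟨e, subset_rfl⟩
  | half j b => exact Or.inr fun x hx => ⟨j, fun y hy => hy.trans hx⟩
  | union _ _ ihs iht =>
    rcases ihs with ⟨e, he⟩ | hs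
    · exact Or.inl ⟨e, he.trans subset_union_left⟩
    rcases iht with ⟨e, he⟩ | ht
    · exact Or.inl ⟨e, he.trans subset_union_right⟩
    refine Or.inr fun x hx => hx.elim (fun hx => ?_) fun hx => ?_
    · obtain ⟨j, hj⟩ := hs x hx
      exact ⟨j, hj.trans subset_union_left⟩
    · obtain ⟨j, hj⟩ := ht x hx
      exact ⟨j, hj.trans subset_union_right⟩

theorem subset_half_of_disjoint {c d : Set (Fin N → Bool)} {j : Fin N} {b : Bool}
    (hc : ∀ x ∈ c, ∃ k, half k (x k) ⊆ c) (hd : half j b ⊆ d) (hcd : Disjoint c d) :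
    c ⊆ half j (!b) := by
  intro x hx
  obtain ⟨k, hk⟩ := hc x hx
  obtain ⟨rfl, hne⟩ := half_disjoint_iff.1 ((hcd.mono_left hk).mono_right hd)
  exact Bool.eq_not.2 hne

variable [Nontrivial (Fin N)]

theorem half_inter_parityClass_nonempty (j : Fin N) (b : Bool) (e : ZMod 2) :
    (half j b ∩ parityClass e).Nonempty := by
  obtain ⟨k, hk⟩ := exists_ne j
  obtain ⟨y, hy, hye⟩ := exists_parity_eq_of_flipAt_mem (s := half j b) (x := fun _ => b) (j := k)
    rfl (Function.update_of_ne hk.symm ..) e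
  exact ⟨y, hy, hye⟩

theorem parityClass_nonempty (e : ZMod 2) : (parityClass e : Set (Fin N → Bool)).Nonempty :=
  (half_inter_parityClass_nonempty (Classical.arbitrary _) false e).mono inter_subset_right

theorem parityClass_not_subset_half (e : ZMod 2) (j : Fin N) (b : Bool) :
    ¬ parityClass e ⊆ half j b := fun h => by
  obtain ⟨y, hyj, hye⟩ := half_inter_parityClass_nonempty j (!b) e
  exact Bool.not_ne_self b (hyj.symm.trans (h hye))

theorem Contact.nonempty_right {s t : Set (Fin N → Bool)} (h : Contact s t) : t.Nonempty := by
  rcases h with ⟨x, -, hxt⟩ | ⟨e, -, het⟩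
  · exact ⟨x, hxt⟩
  · exact (parityClass_nonempty _).mono het

theorem Contact.nonempty_left {s t : Set (Fin N → Bool)} (h : Contact s t) : s.Nonempty :=
  h.symm.nonempty_right

theorem eq_empty_of_not_contact {s t : Set (Fin N → Bool)} {e : ZMod 2} (ht : Admissible t)
    (hs : parityClass e ⊆ s) (hst : ¬ Contact s t) : t = ∅ := by
  have hd := disjoint_of_not_contact hst
  rw [← not_nonempty_iff_eq_empty]
  rintro ⟨x, hx⟩
  rcases exists_parityClass_subset_or_locally_half ht with ⟨e', he'⟩ | hloc
  · rcases zmod_two_eq_or_eq_add_one e' e with rfl | rfl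
    · obtain ⟨y, hy⟩ := parityClass_nonempty (N := N) e'
      exact disjoint_left.1 hd (hs hy) (he' hy)
    · exact hst (Or.inr ⟨e, hs, he'⟩)
  · obtain ⟨j, hj⟩ := hloc x hx
    obtain ⟨y, hyj, hye⟩ := half_inter_parityClass_nonempty j (x j) e
    exact disjoint_left.1 hd (hs hye) (hj hyj)

theorem exists_subset_half_true_of_not_contact {c : Bool → Set (Fin N → Bool)}
    (hc : ∀ g, Admissible (c g)) (h : ¬ Contact (c false) (c true)) :
    ∃ g j, c g ⊆ half j true := by
  have hd := disjoint_of_not_contact h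
  by_contra! hne
  have hne' : ∀ g, (c g).Nonempty := fun g => nonempty_iff_ne_empty.2 fun h =>
    hne g (Classical.arbitrary _) (h ▸ empty_subset _)
  have hloc : ∀ g, ∀ x ∈ c g, ∃ k, half k (x k) ⊆ c g := by
    intro g
    refine (exists_parityClass_subset_or_locally_half (hc g)).resolve_left ?_
    rintro ⟨e, he⟩
    cases g
    · exact (hne' true).ne_empty (eq_empty_of_not_contact (hc true) he h)
    · exact (hne' false).ne_empty (eq_empty_of_not_contact (hc false) he (mt Contact.symm h))
  obtain ⟨x, hx⟩ := hne' false
  obtain ⟨y, hy⟩ := hne' true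
  obtain ⟨j, hj⟩ := hloc false x hx
  obtain ⟨k, hk⟩ := hloc true y hy
  obtain ⟨rfl, hxy⟩ := half_disjoint_iff.1 ((hd.mono_left hj).mono_right hk)
  cases hyj : y j
  · exact hne false j (by simpa [hyj] using subset_half_of_disjoint (hloc false) hk hd)
  · exact hne true j (by simpa [hyj ▸ hxy] using subset_half_of_disjoint (hloc true) hj hd.symm)

end ParityCube

abbrev ParityCube (N : ℕ) : Type := {s : Set (Fin N → Bool) // ParityCube.Admissible s}

instance (N : ℕ) : Nonempty (ParityCube N) := ⟨⟨∅, .empty⟩⟩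

instance (N : ℕ) : csLang.Structure (ParityCube N) where
  funMap {n} f v := match n, f with
    | _, .zero => ⟨∅, .empty⟩
    | _, .plus => ⟨(v 0).1 ∪ (v 1).1, .union (v 0).2 (v 1).2⟩
  RelMap {n} r v := match n, r with
    | _, .delta => ParityCube.Contact (v 0).1 (v 1).1

namespace ParityCube

open Set

variable {N : ℕ}

theorem val_mAdd (a b : ParityCube N) : (mAdd (ParityCube N) a b).1 = a.1 ∪ b.1 := rfl

theorem val_mZero : (mZero (ParityCube N)).1 = ∅ := rfl

theorem mDelta_iff {a b : ParityCube N} : mDelta (ParityCube N) a b ↔ Contact a.1 b.1 := Iff.rfl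

theorem mLe_iff {a b : ParityCube N} : mLe (ParityCube N) a b ↔ a.1 ⊆ b.1 := by
  unfold mLe
  rw [Subtype.ext_iff, val_mAdd, union_eq_right]

theorem mem_val_mSum {l : List (ParityCube N)} {x : Fin N → Bool} :
    x ∈ (mSum (ParityCube N) l).1 ↔ ∃ a ∈ l, x ∈ a.1 := by
  induction l with
  | nil => simp [mSum, val_mZero]
  | cons a l ih => simp [mSum_cons, val_mAdd, ih]

theorem val_mSum_ofFn {n : ℕ} (c : Fin n → ParityCube N) :
    (mSum (ParityCube N) (List.ofFn c)).1 = ⋃ i, (c i).1 := by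
  ext x
  simp [mem_val_mSum]

theorem isD1ContactSemilattice [Nontrivial (Fin N)] : IsD1ContactSemilattice (ParityCube N) where
  add_assoc _ _ _ := Subtype.ext (union_assoc _ _ _).symm
  add_comm _ _ := Subtype.ext (union_comm _ _)
  add_self _ := Subtype.ext (union_self _)
  zero_add _ := Subtype.ext (empty_union _)
  ne_zero_of_delta a b h :=
    ⟨fun ha => h.nonempty_left.ne_empty (by rw [ha]; rfl),
      fun hb => h.nonempty_right.ne_empty (by rw [hb]; rfl)⟩
  delta_self a ha := by
    rw [mDelta_iff, Contact, inter_self]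
    exact Or.inl (nonempty_iff_ne_empty.2 fun h => ha (Subtype.ext h))
  delta_symm _ _ := Contact.symm
  delta_mono _ _ _ _ h ha hb := h.mono (mLe_iff.1 ha) (mLe_iff.1 hb)
  d1 a b c₀ c₁ h h₀ h₁ := by
    rw [mLe_iff, val_mAdd] at h₀ h₁
    rw [mLe_iff]
    intro x hx
    rcases h₀ hx with hxa | hx₀
    · exact hxa
    · exact (h₁ hx).resolve_right (disjoint_left.1 (disjoint_of_not_contact h) hx₀)

theorem parityClass_not_subset_iUnion_half {n : ℕ} (J : Fin n → Fin N) (hn : n < N)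
    (e : ZMod 2) : ¬ parityClass e ⊆ ⋃ i, half (J i) true := by
  obtain ⟨m, hm⟩ : ∃ m, ∀ i, J i ≠ m := by
    by_contra! h
    have := Fintype.card_le_of_surjective J h
    simp only [Fintype.card_fin] at this
    omega
  obtain ⟨y, hy, rfl⟩ := exists_parity_eq_of_flipAt_mem (s := (⋃ i, half (J i) true)ᶜ)
    (x := fun _ => false) (j := m) (by simp [half])
    (by simp [half, flipAt, Function.update_of_ne (hm _)]) e
  exact fun h => hy (h rfl)

theorem d2_of_lt [Nontrivial (Fin N)] {n : ℕ} (hn : n < N) : D2 (ParityCube N) n := by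
  intro a b c hsep hcov hba
  simp only [mDelta_iff] at hsep hba
  simp only [mLe_iff, val_mSum_ofFn] at hcov
  suffices ∃ f : Fin n → Bool, ¬ b.1 ⊆ ⋃ i, (c i (f i)).1 ∧ ¬ a.1 ⊆ ⋃ i, (c i (f i)).1 by
    obtain ⟨f, hb, ha⟩ := this
    exact (hcov f).elim hb ha
  rcases hba with ⟨x, hxb, hxa⟩ | ⟨e, hb, ha⟩
  · have hx : ∀ i, ∃ g, x ∉ (c i g).1 := fun i => by
      by_contra! h
      exact disjoint_left.1 (disjoint_of_not_contact (hsep i)) (h false) (h true)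
    choose f hf using hx
    have hxU : x ∉ ⋃ i, (c i (f i)).1 := by simpa using hf
    exact ⟨f, fun h => hxU (h hxb), fun h => hxU (h hxa)⟩
  · choose f J hJ using fun i =>
      exists_subset_half_true_of_not_contact (fun g => (c i g).2) (hsep i)
    have hU : ⋃ i, (c i (f i)).1 ⊆ ⋃ i, half (J i) true := iUnion_mono hJ
    exact ⟨f, fun h => parityClass_not_subset_iUnion_half J hn e (hb.trans (h.trans hU)),
      fun h => parityClass_not_subset_iUnion_half J hn (e + 1) (ha.trans (h.trans hU))⟩

theorem parityClass_subset_iUnion_half (f : Fin N → Bool) (e : ZMod 2) :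
    parityClass e ⊆ ⋃ i, half i (f i) ∨ parityClass (e + 1) ⊆ ⋃ i, half i (f i) := by
  have hout : ∀ x ∉ ⋃ i, half i (f i), x = fun i => !f i := fun x hx =>
    funext fun i => Bool.eq_not.2 fun h => hx (mem_iUnion.2 ⟨i, h⟩)
  by_cases hz : parity (fun i => !f i) = e
  · refine Or.inr fun x hx => by_contra fun hxU => ?_
    have hx' : parity x = e + 1 := hx
    rw [hout x hxU, hz] at hx'
    exact succ_ne_self e hx'.symm
  · exact Or.inl fun x hx => by_contra fun hxU => hz (hout x hxU ▸ hx)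

theorem not_d2 [Nontrivial (Fin N)] : ¬ D2 (ParityCube N) N := by
  intro h
  refine h ⟨parityClass 1, .parityClass 1⟩ ⟨parityClass 0, .parityClass 0⟩
    (fun i b => ⟨half i b, .half i b⟩) (fun i => ?_) (fun f => ?_) ?_
  · rintro (⟨x, hx₀, hx₁⟩ | ⟨e, he, -⟩)
    · exact Bool.false_ne_true (hx₀.symm.trans hx₁)
    · exact parityClass_not_subset_half e i false he
  · simp only [mLe_iff, val_mSum_ofFn]
    simpa using parityClass_subset_iUnion_half f 0
  · exact Or.inr ⟨0, subset_rfl, by rw [zero_add]; exact subset_rfl⟩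

end ParityCube

/-- The class of Ivanova Contact join-semilattices is not finitely axiomatizable:
no single first-order sentence in the language `{+, 0, δ}` has as models exactly
the Ivanova Contact join-semilattices. -/
theorem stmt11 :
    ¬ ∃ ψ : csLang.Sentence,
      ∀ (M : Type) [csLang.Structure M], (M ⊨ ψ) ↔ IsIvanova M := by
  rintro ⟨ψ, hψ⟩
  have hP : IsIvanova ((hyperfilter ℕ : Filter ℕ).Product fun k => ParityCube (k + 2)) :=
    Filter.Product.isIvanova (.of_forall fun _ => ParityCube.isD1ContactSemilattice) fun n _ =>
      ((eventually_gt_atTop n).filter_mono Nat.hyperfilter_le_atTop).mono fun _ hk =>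
        ParityCube.d2_of_lt (by omega)
  obtain ⟨k, hk⟩ := ((Ultraproduct.sentence_realize ψ).1 ((hψ _).2 hP)).exists
  exact ParityCube.not_d2 (((isIvanova_iff _).1 ((hψ _).1 hk)).2 (k + 2) (by omega))
end

section
/- A weak contact semilattice S satisfies (D1) together with (D2_n) for every positive integer n (i.e., S is an Ivanova Contact join-semilattice) if and only if S can be embedded into the powerset of some set X with the nonempty-intersection contact; that is, if and only if there exist a set X and an injective map h : S → 𝒫(X) with h(0) = ∅, h(a + b) = h(a) ∪ h(b) for all a, b ∈ S, and a δ b if and only if h(a) ∩ h(b) ≠ ∅, for all a, b ∈ S. -/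
/-!
The points of the representation are the ideals of `S` whose complement is a `δ`-clique, and
`a` is sent to the set of those ideals that miss it; this sends `⊥` to `∅` and joins to unions
because complements of ideals are prime. Such ideals come from Zorn's lemma as ideals maximal
inside a lower set `R` that splits along non-touching pairs (`k ∈ R` and `¬ u δ v` give
`k ⊔ u ∈ R` or `k ⊔ v ∈ R`). For `R = {k | ¬ a ≤ k}` splitting is (D1); this separates `a` from
`b` whenever `¬ a ≤ b`. For a contact `a δ b` take for `R` the set of `k` such that no finite
family of non-touching pairs forces `k`, joined with any choice of one side of each pair, above
`a` or `b`: splitting is then immediate, and `⊥ ∈ R` is (D2_n). Conversely, the powerset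
satisfies (D1) and (D2_n), and both conditions pull back along embeddings.
-/

open Function

namespace Order.Ideal

variable {P : Type*} [SemilatticeSup P] [OrderBot P]

theorem exists_le_maximal_subset {R : Set P} (hR : IsLowerSet R) {I : Ideal P}
    (hI : (I : Set P) ⊆ R) :
    ∃ K : Ideal P, I ≤ K ∧ (K : Set P) ⊆ R ∧ ∀ w ∉ K, ∃ k ∈ K, k ⊔ w ∉ R := by
  let 𝒮 : Set (Ideal P) := {J | (J : Set P) ⊆ R}
  have hchain : ∀ c ⊆ 𝒮, IsChain (· ≤ ·) c → ∀ J ∈ c, ∃ U ∈ 𝒮, ∀ J' ∈ c, J' ≤ U := by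
    intro c hcR hc J hJ
    have hU := isIdeal_sUnion_of_isChain (C := (fun J : Ideal P => (J : Set P)) '' c)
      (by simp [Ideal.isIdeal])
      (hc.image_of_map_rel (· ≤ ·) (· ⊆ ·) (fun J : Ideal P => (J : Set P))
        fun _ _ => coe_subset_coe.2) ⟨J, J, hJ, rfl⟩
    refine ⟨hU.toIdeal, ?_, fun J' hJ' =>
      (le_toIdeal hU).2 (Set.subset_sUnion_of_mem ⟨J', hJ', rfl⟩)⟩
    change (hU.toIdeal : Set P) ⊆ R
    rw [coe_toIdeal, Set.sUnion_subset_iff]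
    rintro _ ⟨J', hJ', rfl⟩
    exact hcR hJ'
  obtain ⟨K, hIK, hKR, hmax⟩ := zorn_le_nonempty₀ 𝒮 hchain I hI
  refine ⟨K, hIK, hKR, fun w hw => ?_⟩
  by_contra! hKw
  have hsub : ((K ⊔ principal w : Ideal P) : Set P) ⊆ R := by
    intro x hx
    obtain ⟨i, hi, j, hj, hx⟩ := mem_sup.1 hx
    exact hR (hx.trans (sup_le_sup_left (mem_principal.1 hj) i)) (hKw i hi)
  exact hw (hmax hsub le_sup_left (le_sup_right (a := K) mem_principal_self))

end Order.Ideal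

theorem map_le_map_iff_of_injective {S T F : Type*} [SemilatticeSup S] [SemilatticeSup T]
    [FunLike F S T] [SupHomClass F S T] {φ : F} (hφ : Injective φ) {a b : S} :
    φ a ≤ φ b ↔ a ≤ b :=
  ⟨fun h => sup_eq_right.1 (hφ (by rw [map_sup, sup_eq_right.2 h])),
    fun h => OrderHomClass.mono φ h⟩

section Transfer

variable {S T : Type*} [SemilatticeSup S] [OrderBot S] [SemilatticeSup T] [OrderBot T]
  {δ : S → S → Prop} {ε : T → T → Prop}

theorem CondD1.of_injective (hε : CondD1 ε) (φ : SupBotHom S T) (hφ : Injective φ)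
    (hδ : ∀ a b, δ a b ↔ ε (φ a) (φ b)) : CondD1 δ := by
  intro a b c₀ c₁ hc h₀ h₁
  rw [← map_le_map_iff_of_injective hφ, map_sup] at h₀ h₁
  rw [← map_le_map_iff_of_injective hφ]
  exact hε _ _ _ _ (by rwa [← hδ]) h₀ h₁

theorem CondD2.of_injective {n : ℕ} (hε : CondD2 n ε) (φ : SupBotHom S T) (hφ : Injective φ)
    (hδ : ∀ a b, δ a b ↔ ε (φ a) (φ b)) : CondD2 n δ := by
  intro a b c hc hcover hba
  refine hε (φ a) (φ b) (fun i β => φ (c i β)) (fun i => by rw [← hδ]; exact hc i)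
    (fun f => ?_) ((hδ b a).1 hba)
  simp only [← map_le_map_iff_of_injective hφ, map_finset_sup] at hcover
  exact hcover f

end Transfer

section Powerset

variable {X : Type*}

theorem condD1_inter_nonempty : CondD1 fun A B : Set X => (A ∩ B).Nonempty := by
  intro A B C₀ C₁ hC hB₀ hB₁ x hx
  obtain hA | h₀ := hB₀ hx
  · exact hA
  obtain hA | h₁ := hB₁ hx
  · exact hA
  exact absurd ⟨x, h₀, h₁⟩ hC

theorem condD2_inter_nonempty (n : ℕ) : CondD2 n fun A B : Set X => (A ∩ B).Nonempty := by
  classical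
  rintro A B C hC hcover ⟨x, hxB, hxA⟩
  -- from each pair choose the side missing `x`
  have hx : x ∉ Finset.univ.sup fun i => C i (decide (x ∈ C i false)) := by
    simp only [Finset.sup_set_eq_biUnion, Set.mem_iUnion, not_exists]
    intro i _ hxi
    by_cases h : x ∈ C i false
    · simp only [h, decide_true] at hxi
      exact hC i ⟨x, h, hxi⟩
    · simp only [h, decide_false] at hxi
  obtain h | h := hcover fun i => decide (x ∈ C i false)
  exacts [hx (h hxB), hx (h hxA)]

end Powerset

section Representation

variable {S : Type*} [SemilatticeSup S] {δ : S → S → Prop}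

variable (δ) in
def IsCliqueCompl (K : Order.Ideal S) : Prop :=
  ∀ u ∉ K, ∀ v ∉ K, δ u v

variable (δ) in
def cliqueRep (a : S) : Set {K : Order.Ideal S // IsCliqueCompl δ K} :=
  {K | a ∉ K.1}

variable (δ) in
theorem cliqueRep_sup (a b : S) : cliqueRep δ (a ⊔ b) = cliqueRep δ a ∪ cliqueRep δ b := by
  ext K
  simp [cliqueRep, Order.Ideal.sup_mem_iff, imp_iff_not_or]

variable [OrderBot S]

variable (δ) in
theorem cliqueRep_bot : cliqueRep δ (⊥ : S) = ∅ :=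
  Set.eq_empty_iff_forall_notMem.2 fun K hK => hK K.1.bot_mem

theorem exists_isCliqueCompl {R : Set S} (hR : IsLowerSet R)
    (hsplit : ∀ k ∈ R, ∀ u v, ¬ δ u v → k ⊔ u ∈ R ∨ k ⊔ v ∈ R) {I : Order.Ideal S}
    (hI : (I : Set S) ⊆ R) :
    ∃ K : Order.Ideal S, IsCliqueCompl δ K ∧ I ≤ K ∧ (K : Set S) ⊆ R := by
  obtain ⟨K, hIK, hKR, hmax⟩ := Order.Ideal.exists_le_maximal_subset hR hI
  refine ⟨K, fun u hu v hv => ?_, hIK, hKR⟩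
  by_contra huv
  obtain ⟨k₁, hk₁, hu⟩ := hmax u hu
  obtain ⟨k₂, hk₂, hv⟩ := hmax v hv
  obtain h | h := hsplit _ (hKR (Order.Ideal.sup_mem hk₁ hk₂)) u v huv
  · exact hu (hR (sup_le_sup_right le_sup_left u) h)
  · exact hv (hR (sup_le_sup_right le_sup_right v) h)

theorem exists_isCliqueCompl_of_not_le (hD1 : CondD1 δ) {a b : S} (hab : ¬ a ≤ b) :
    ∃ K : Order.Ideal S, IsCliqueCompl δ K ∧ b ∈ K ∧ a ∉ K := by
  obtain ⟨K, hK, hbK, haK⟩ := exists_isCliqueCompl (δ := δ) (R := (Set.Ici a)ᶜ)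
    (isUpperSet_Ici a).compl
    (fun k hk u v huv => not_and_or.1 fun h => hk (hD1 k a u v huv h.1 h.2))
    (I := Order.Ideal.principal b)
    (fun x hx hax => hab (hax.trans (Order.Ideal.mem_principal.1 hx)))
  exact ⟨K, hK, Order.Ideal.principal_le_iff.1 hbK, fun ha => haK ha le_rfl⟩

/-- A finite family of pairs is a `T : Finset (Bool → S)`, the pair `p` having sides `p false` and
`p true`; `σ` chooses a side of each pair. -/
def ChoiceConsistent (δ : S → S → Prop) (a b k : S) : Prop :=
  ∀ T : Finset (Bool → S), (∀ p ∈ T, ¬ δ (p false) (p true)) →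
    ¬ ∀ σ : (Bool → S) → Bool,
      a ≤ k ⊔ T.sup (fun p => p (σ p)) ∨ b ≤ k ⊔ T.sup (fun p => p (σ p))

theorem not_contact_of_forall_choice (hD2 : ∀ n : ℕ, 0 < n → CondD2 n δ)
    {T : Finset (Bool → S)} (hT₀ : T.Nonempty) (hT : ∀ p ∈ T, ¬ δ (p false) (p true)) {a b : S}
    (hcover : ∀ σ : (Bool → S) → Bool,
      b ≤ T.sup (fun p => p (σ p)) ∨ a ≤ T.sup (fun p => p (σ p))) :
    ¬ δ b a := by
  classical
  let e := Fintype.equivFin T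
  have hpos : 0 < Fintype.card T := Fintype.card_pos_iff.2 hT₀.to_subtype
  refine hD2 _ hpos a b (fun i => (e.symm i).1) (fun i => hT _ (e.symm i).2) fun f => ?_
  let σ : (Bool → S) → Bool := fun p => if hp : p ∈ T then f (e ⟨p, hp⟩) else false
  have hle : T.sup (fun p => p (σ p)) ≤ Finset.univ.sup fun i => (e.symm i).1 (f i) :=
    Finset.sup_le fun p hp => by
      simpa [σ, hp] using Finset.le_sup (f := fun i => (e.symm i).1 (f i))
        (Finset.mem_univ (e ⟨p, hp⟩))
  exact (hcover σ).imp (·.trans hle) (·.trans hle)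

theorem choiceConsistent_bot (hwc : IsWeakContact δ) (hD2 : ∀ n : ℕ, 0 < n → CondD2 n δ)
    {a b : S} (hab : δ a b) : ChoiceConsistent δ a b ⊥ := by
  intro T hT hcover
  simp only [bot_sup_eq] at hcover
  obtain rfl | hT₀ := T.eq_empty_or_nonempty
  · obtain h | h := hcover fun _ => false
    exacts [(hwc.1 a b hab).1 (le_bot_iff.1 h), (hwc.1 a b hab).2 (le_bot_iff.1 h)]
  · exact not_contact_of_forall_choice hD2 hT₀ hT hcover hab

theorem ChoiceConsistent.mono {a b k k' : S} (h : ChoiceConsistent δ a b k) (hk : k' ≤ k) :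
    ChoiceConsistent δ a b k' := fun T hT hcover =>
  h T hT fun σ =>
    (hcover σ).imp (·.trans (sup_le_sup_right hk _)) (·.trans (sup_le_sup_right hk _))

theorem ChoiceConsistent.not_le {a b k : S} (h : ChoiceConsistent δ a b k) :
    ¬ a ≤ k ∧ ¬ b ≤ k := by
  refine not_or.1 fun hk => h ∅ (by simp) fun _ => ?_
  simpa using hk

theorem ChoiceConsistent.sup_or_sup {a b k u v : S} (h : ChoiceConsistent δ a b k)
    (huv : ¬ δ u v) : ChoiceConsistent δ a b (k ⊔ u) ∨ ChoiceConsistent δ a b (k ⊔ v) := by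
  classical
  by_contra hcon
  unfold ChoiceConsistent at hcon
  push Not at hcon
  obtain ⟨⟨Tu, hTu, hu⟩, Tv, hTv, hv⟩ := hcon
  let p : Bool → S := fun β => bif β then v else u
  let T := insert p (Tu ∪ Tv)
  refine h T (by simpa [T, or_imp, forall_and] using ⟨huv, hTu, hTv⟩) fun σ => ?_
  have hp : p (σ p) ≤ T.sup fun q => q (σ q) :=
    Finset.le_sup (f := fun q => q (σ q)) (Finset.mem_insert_self p _)
  have lift : ∀ {w : S} {T' : Finset (Bool → S)}, w ≤ T.sup (fun q => q (σ q)) → T' ⊆ T →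
      k ⊔ w ⊔ T'.sup (fun q => q (σ q)) ≤ k ⊔ T.sup fun q => q (σ q) := fun hw hT' =>
    sup_le (sup_le_sup_left hw k) ((Finset.sup_mono hT').trans le_sup_right)
  -- whichever side of `p` the choice `σ` takes, the family `Tu` or `Tv` that defeats `k ⊔ u`
  -- resp. `k ⊔ v` also defeats `k` on `T`
  cases hσ : σ p
  · have l := lift (by simpa [p, hσ] using hp)
      (Finset.subset_union_left.trans (Finset.subset_insert _ _))
    exact (hu σ).imp (·.trans l) (·.trans l)
  · have l := lift (by simpa [p, hσ] using hp)
      (Finset.subset_union_right.trans (Finset.subset_insert _ _))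
    exact (hv σ).imp (·.trans l) (·.trans l)

theorem exists_isCliqueCompl_of_contact (hwc : IsWeakContact δ)
    (hD2 : ∀ n : ℕ, 0 < n → CondD2 n δ) {a b : S} (hab : δ a b) :
    ∃ K : Order.Ideal S, IsCliqueCompl δ K ∧ a ∉ K ∧ b ∉ K := by
  obtain ⟨K, hK, -, hKR⟩ := exists_isCliqueCompl (δ := δ)
    (R := {k | ChoiceConsistent δ a b k}) (fun _ _ hk h => h.mono hk)
    (fun k hk u v huv => hk.sup_or_sup huv)
    (I := Order.Ideal.principal ⊥)
    (fun x hx => (choiceConsistent_bot hwc hD2 hab).mono (Order.Ideal.mem_principal.1 hx))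
  exact ⟨K, hK, fun ha => (hKR ha).not_le.1 le_rfl, fun hb => (hKR hb).not_le.2 le_rfl⟩

theorem cliqueRep_injective (hD1 : CondD1 δ) : Injective (cliqueRep δ) := by
  have hle : ∀ a b : S, cliqueRep δ a ⊆ cliqueRep δ b → a ≤ b := fun a b hsub => by
    by_contra hab
    obtain ⟨K, hK, hbK, haK⟩ := exists_isCliqueCompl_of_not_le hD1 hab
    exact hsub (a := ⟨K, hK⟩) haK hbK
  exact fun a b h => le_antisymm (hle a b h.subset) (hle b a h.symm.subset)

theorem contact_iff_cliqueRep_inter_nonempty (hwc : IsWeakContact δ)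
    (hD2 : ∀ n : ℕ, 0 < n → CondD2 n δ) {a b : S} :
    δ a b ↔ (cliqueRep δ a ∩ cliqueRep δ b).Nonempty := by
  refine ⟨fun hab => ?_, fun ⟨K, haK, hbK⟩ => K.2 a haK b hbK⟩
  obtain ⟨K, hK, haK, hbK⟩ := exists_isCliqueCompl_of_contact hwc hD2 hab
  exact ⟨⟨K, hK⟩, haK, hbK⟩

end Representation

theorem stmt15 {S : Type} [SemilatticeSup S] [OrderBot S] (δ : S → S → Prop)
    (hwc : IsWeakContact δ) :
    (CondD1 δ ∧ ∀ n : ℕ, 0 < n → CondD2 n δ) ↔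
      ∃ (X : Type) (h : S → Set X),
        Function.Injective h ∧
        h ⊥ = ∅ ∧
        (∀ a b : S, h (a ⊔ b) = h a ∪ h b) ∧
        (∀ a b : S, δ a b ↔ (h a ∩ h b).Nonempty) := by
  constructor
  · rintro ⟨hD1, hD2⟩
    exact ⟨_, cliqueRep δ, cliqueRep_injective hD1, cliqueRep_bot δ, cliqueRep_sup δ,
      fun _ _ => contact_iff_cliqueRep_inter_nonempty hwc hD2⟩
  · rintro ⟨X, h, hinj, hbot, hsup, hδ⟩
    let φ : SupBotHom S (Set X) := ⟨⟨h, hsup⟩, hbot⟩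
    exact ⟨condD1_inter_nonempty.of_injective φ hinj hδ,
      fun n _ => (condD2_inter_nonempty n).of_injective φ hinj hδ⟩
end

section
/- Let C and D be Boolean algebras, let δ_C be the overlap contact on C (a δ_C b if and only if a ⊓ b ≠ 0), and let δ_D be a weak contact relation on D. Let χ : C → D be a map with χ(0) = 0, χ(1) = 1, χ(a ⊔ b) = χ(a) ⊔ χ(b) for all a, b ∈ C, and a δ_C b if and only if χ(a) δ_D χ(b), for all a, b ∈ C. Then χ is a Boolean algebra homomorphism: χ(aᶜ) = χ(a)ᶜ and χ(a ⊓ b) = χ(a) ⊓ χ(b) for all a, b ∈ C. -/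
theorem IsWeakContact.of_inf_ne_bot {S : Type*} [SemilatticeInf S] [OrderBot S]
    {δ : S → S → Prop} (hδ : IsWeakContact δ) {x y : S} (hxy : x ⊓ y ≠ ⊥) : δ x y :=
  hδ.2.2.2 _ _ _ _ (hδ.2.1 _ hxy) inf_le_left inf_le_right

section BooleanMap

variable {C D : Type*} [BooleanAlgebra C] [BooleanAlgebra D] {χ : C → D}

theorem map_compl_of_reflects_contact {δ : D → D → Prop} (hwc : IsWeakContact δ)
    (h1 : χ ⊤ = ⊤) (hsup : ∀ a b : C, χ (a ⊔ b) = χ a ⊔ χ b)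
    (hδ : ∀ a b : C, δ (χ a) (χ b) → a ⊓ b ≠ ⊥) (a : C) : χ aᶜ = (χ a)ᶜ := by
  have hdisj : χ a ⊓ χ aᶜ = ⊥ := by
    by_contra hne
    exact hδ a aᶜ (hwc.of_inf_ne_bot hne) inf_compl_eq_bot
  have hcodisj : χ a ⊔ χ aᶜ = ⊤ := by rw [← hsup, sup_compl_eq_top, h1]
  exact (IsCompl.of_eq hdisj hcodisj).compl_eq.symm

theorem map_inf_of_map_sup_of_map_compl (hsup : ∀ a b : C, χ (a ⊔ b) = χ a ⊔ χ b)
    (hcompl : ∀ a : C, χ aᶜ = (χ a)ᶜ) (a b : C) : χ (a ⊓ b) = χ a ⊓ χ b := by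
  rw [← compl_compl (a ⊓ b), compl_inf, hcompl, hsup, hcompl, hcompl, compl_sup,
    compl_compl, compl_compl]

end BooleanMap

theorem stmt16_general {C D : Type*} [BooleanAlgebra C] [BooleanAlgebra D]
    (δD : D → D → Prop) (hwc : IsWeakContact δD)
    (χ : C → D) (h1 : χ ⊤ = ⊤)
    (hsup : ∀ a b : C, χ (a ⊔ b) = χ a ⊔ χ b)
    (hδ : ∀ a b : C, a ⊓ b ≠ ⊥ ↔ δD (χ a) (χ b)) :
    (∀ a : C, χ aᶜ = (χ a)ᶜ) ∧ (∀ a b : C, χ (a ⊓ b) = χ a ⊓ χ b) := by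
  have hcompl := map_compl_of_reflects_contact hwc h1 hsup fun a b => (hδ a b).mpr
  exact ⟨hcompl, map_inf_of_map_sup_of_map_compl hsup hcompl⟩

theorem stmt16 {C D : Type*} [BooleanAlgebra C] [BooleanAlgebra D]
    (δD : D → D → Prop) (hwc : IsWeakContact δD)
    (χ : C → D) (h0 : χ ⊥ = ⊥) (h1 : χ ⊤ = ⊤)
    (hsup : ∀ a b : C, χ (a ⊔ b) = χ a ⊔ χ b)
    (hδ : ∀ a b : C, a ⊓ b ≠ ⊥ ↔ δD (χ a) (χ b)) :
    (∀ a : C, χ aᶜ = (χ a)ᶜ) ∧ (∀ a b : C, χ (a ⊓ b) = χ a ⊓ χ b) :=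
  stmt16_general δD hwc χ h1 hsup hδ
end
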